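/- arXiv:1312.6643 — 10 statements merged into one kernel-verified Lean document; each statement's English description precedes it below -/
import Mathlib

section
/- The 5×5 circulant matrix L = M(cos²(4π/5), cos²(2π/5)) is completely positive semidefinite: the rank-one psd matrices x_i x_iᵀ with x_i = (cos(4iπ/5), sin(4iπ/5)) ∈ ℝ², i ∈ [5], form a Gram representation of L. -/
/-!
The vector `cycVec i` is the unit vector at angle `θᵢ = 4(i+1)π/5`, so
`Tr(xᵢxᵢᵀ xⱼxⱼᵀ) = ⟨xᵢ, xⱼ⟩² = cos²(θᵢ - θⱼ)`. This depends only on `d = i - j mod 5`, and for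
`d = 0, …, 4` it equals `1, cos²(4π/5), cos²(8π/5), cos²(12π/5), cos²(16π/5)`, i.e. by periodicity
`1, cos²(4π/5), cos²(2π/5), cos²(2π/5), cos²(4π/5)`: the first row of the circulant matrix `L`.
-/

open Matrix Real

def CompletelyPSD {n : ℕ} (A : Matrix (Fin n) (Fin n) ℝ) : Prop :=
  ∃ (d : ℕ) (X : Fin n → Matrix (Fin d) (Fin d) ℝ),
    1 ≤ d ∧ (∀ i, (X i).PosSemidef) ∧ ∀ i j, A i j = ((X i) * (X j)).trace

/-- The symmetric 5×5 circulant matrix `M(b,c)`: diagonal entries `1`,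
entries `b` at positions `(i, i ± 1 mod 5)`, entries `c` at positions `(i, i ± 2 mod 5)`. -/
def Mcirc (b c : ℝ) : Matrix (Fin 5) (Fin 5) ℝ :=
  Matrix.of fun i j =>
    if i = j then 1 else if i - j = (1 : Fin 5) ∨ i - j = (4 : Fin 5) then b else c

/-- The vectors `x_i = (cos(4iπ/5), sin(4iπ/5))` for `i ∈ [5]`. -/
noncomputable def cycVec (i : Fin 5) : Fin 2 → ℝ :=
  ![Real.cos (4 * (i.1 + 1) * π / 5), Real.sin (4 * (i.1 + 1) * π / 5)]

theorem Matrix.posSemidef_vecMulVec_self {n : Type*} [Fintype n] (x : n → ℝ) :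
    (vecMulVec x x).PosSemidef := by
  simpa using posSemidef_vecMulVec_self_star x

theorem Matrix.trace_vecMulVec_self_mul_vecMulVec_self {n R : Type*} [Fintype n] [CommSemiring R]
    (x y : n → R) : (vecMulVec x x * vecMulVec y y).trace = (x ⬝ᵥ y) ^ 2 := by
  rw [vecMulVec_mul_vecMulVec, trace_vecMulVec, dotProduct_smul, smul_eq_mul, sq]

theorem Real.cos_two_pi_mul_val_sub_div {n : ℕ} (k : ℤ) (i j : Fin n) :
    cos (2 * π * k * (i - j).val / n) = cos (2 * π * k * (i.val - j.val) / n) := by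
  have hn : (n : ℝ) ≠ 0 := by have := i.pos; positivity
  have h : ((i - j).val : ℝ) = i.val - j.val + if j ≤ i then (0 : ℝ) else n := by
    exact_mod_cast Fin.intCast_val_sub_eq_sub_add_ite i j
  split_ifs at h
  · rw [h, add_zero]
  · rw [h, show 2 * π * k * (i.val - j.val + n) / n = 2 * π * k * (i.val - j.val) / n + k * (2 * π) by
        field_simp, cos_add_int_mul_two_pi]

theorem Mcirc_eq_circulant (b c : ℝ) : Mcirc b c = circulant ![1, b, c, c, b] := by
  ext i j
  fin_cases i <;> fin_cases j <;> rfl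

theorem cycVec_dotProduct (i j : Fin 5) :
    cycVec i ⬝ᵥ cycVec j = cos (4 * (i - j).val * π / 5) := by
  have h := cos_two_pi_mul_val_sub_div 2 i j
  push_cast at h
  simp only [cycVec, dotProduct, Fin.sum_univ_two, cons_val_zero, cons_val_one, ← cos_sub]
  convert h.symm using 2 <;> ring

theorem cos_sq_four_mul_val_mul_pi_div_five (d : Fin 5) :
    ![1, cos (4 * π / 5) ^ 2, cos (2 * π / 5) ^ 2, cos (2 * π / 5) ^ 2, cos (4 * π / 5) ^ 2] d
      = cos (4 * d.val * π / 5) ^ 2 := by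
  fin_cases d
  · simp
  · simp
  · simp only [Fin.reduceFinMk, cons_val, Nat.cast_ofNat]
    rw [show 4 * 2 * π / 5 = 2 * π - 2 * π / 5 by ring, cos_two_pi_sub]
  · simp only [Fin.reduceFinMk, cons_val, Nat.cast_ofNat]
    rw [show 4 * 3 * π / 5 = 2 * π / 5 + 2 * π by ring, cos_add_two_pi]
  · simp only [Fin.reduceFinMk, cons_val, Nat.cast_ofNat]
    rw [show 4 * 4 * π / 5 = (2 * π - 4 * π / 5) + 2 * π by ring, cos_add_two_pi, cos_two_pi_sub]

/-- The matrix `L = M(cos²(4π/5), cos²(2π/5))` is completely positive semidefinite: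
the rank-one psd matrices `x_i x_iᵀ` form a Gram representation of `L`. -/
theorem L_completelyPSD :
    (∀ i : Fin 5, (vecMulVec (cycVec i) (cycVec i)).PosSemidef) ∧
    (∀ i j : Fin 5,
      Mcirc (Real.cos (4 * π / 5) ^ 2) (Real.cos (2 * π / 5) ^ 2) i j =
        (vecMulVec (cycVec i) (cycVec i) * vecMulVec (cycVec j) (cycVec j)).trace) ∧
    CompletelyPSD (Mcirc (Real.cos (4 * π / 5) ^ 2) (Real.cos (2 * π / 5) ^ 2)) := by
  have hgram : ∀ i j : Fin 5,
      Mcirc (cos (4 * π / 5) ^ 2) (cos (2 * π / 5) ^ 2) i j =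
        (vecMulVec (cycVec i) (cycVec i) * vecMulVec (cycVec j) (cycVec j)).trace := fun i j => by
    rw [trace_vecMulVec_self_mul_vecMulVec_self, cycVec_dotProduct, Mcirc_eq_circulant,
      circulant_apply, cos_sq_four_mul_val_mul_pi_div_five]
  exact ⟨fun i => posSemidef_vecMulVec_self _, hgram, 2, fun i => vecMulVec (cycVec i) (cycVec i),
    one_le_two, fun i => posSemidef_vecMulVec_self _, hgram⟩
end

section
/- The matrix L = M(cos²(4π/5), cos²(2π/5)) = M((3+√5)/8, (3−√5)/8) is not completely positive, since its trace inner product with the Horn matrix H = M(−1,1) is negative: ⟨L, H⟩ = 5(2−√5)/2 < 0, while the Horn matrix is copositive. -/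
open Matrix Real

def CompletelyPositive {n : ℕ} (A : Matrix (Fin n) (Fin n) ℝ) : Prop :=
  ∃ (d : ℕ) (x : Fin n → Fin d → ℝ),
    1 ≤ d ∧ (∀ i k, 0 ≤ x i k) ∧ ∀ i j, A i j = ∑ k, x i k * x j k

/-- A matrix `H` is copositive if `xᵀ H x ≥ 0` for all entrywise nonnegative `x`. -/
def Copositive {n : ℕ} (H : Matrix (Fin n) (Fin n) ℝ) : Prop :=
  ∀ x : Fin n → ℝ, (∀ i, 0 ≤ x i) → 0 ≤ x ⬝ᵥ H.mulVec x

lemma cos_2pi5' : Real.cos (2 * π / 5) = (Real.sqrt 5 - 1) / 4 := by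
  have h : (2 : ℝ) * π / 5 = 2 * (π / 5) := by ring
  have h5 : Real.sqrt 5 ^ 2 = 5 := Real.sq_sqrt (by norm_num)
  rw [h, Real.cos_two_mul, Real.cos_pi_div_five]
  nlinarith [h5]

lemma cos_4pi5' : Real.cos (4 * π / 5) = -((1 + Real.sqrt 5) / 4) := by
  have h : (4 : ℝ) * π / 5 = 2 * (2 * π / 5) := by ring
  have h5 : Real.sqrt 5 ^ 2 = 5 := Real.sq_sqrt (by norm_num)
  rw [h, Real.cos_two_mul, cos_2pi5']
  nlinarith [h5]

lemma sq4' : Real.cos (4 * π / 5) ^ 2 = (3 + Real.sqrt 5) / 8 := by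
  have h5 : Real.sqrt 5 ^ 2 = 5 := Real.sq_sqrt (by norm_num)
  rw [cos_4pi5']; nlinarith [h5]

lemma sq2' : Real.cos (2 * π / 5) ^ 2 = (3 - Real.sqrt 5) / 8 := by
  have h5 : Real.sqrt 5 ^ 2 = 5 := Real.sq_sqrt (by norm_num)
  rw [cos_2pi5']; nlinarith [h5]

lemma quad_form (b c : ℝ) (x : Fin 5 → ℝ) :
    x ⬝ᵥ (Mcirc b c).mulVec x =
      (x 0^2 + x 1^2 + x 2^2 + x 3^2 + x 4^2)
      + 2*b*(x 0*x 1 + x 1*x 2 + x 2*x 3 + x 3*x 4 + x 4*x 0)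
      + 2*c*(x 0*x 2 + x 1*x 3 + x 2*x 4 + x 3*x 0 + x 4*x 1) := by
  simp (config := { decide := true }) only [dotProduct, mulVec, Mcirc,
    Fin.sum_univ_five, Matrix.of_apply, if_true, if_false]
  ring

lemma inner_form (b c b' c' : ℝ) :
    (∑ i : Fin 5, ∑ j : Fin 5, Mcirc b c i j * Mcirc b' c' i j)
      = 5 + 10 * b * b' + 10 * c * c' := by
  simp (config := { decide := true }) only [Mcirc, Fin.sum_univ_five,
    Matrix.of_apply, if_true, if_false]
  ring

lemma horn_copos : Copositive (Mcirc (-1) 1) := by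
  intro x hx
  have h0 := hx 0; have h1 := hx 1; have h2 := hx 2; have h3 := hx 3; have h4 := hx 4
  rw [quad_form]
  rcases le_total (x 3) (x 4) with h|h
  · nlinarith [sq_nonneg (x 0 - x 1 + x 2 + x 3 - x 4), mul_nonneg h1 h3,
      mul_nonneg h2 (sub_nonneg.2 h)]
  · rcases le_total (x 4) (x 0) with h'|h'
    · nlinarith [sq_nonneg (x 1 - x 2 + x 3 + x 4 - x 0), mul_nonneg h2 h4,
        mul_nonneg h3 (sub_nonneg.2 h')]
    · rcases le_total (x 0) (x 1) with h''|h''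
      · nlinarith [sq_nonneg (x 2 - x 3 + x 4 + x 0 - x 1), mul_nonneg h3 h0,
          mul_nonneg h4 (sub_nonneg.2 h'')]
      · rcases le_total (x 1) (x 2) with h3'|h3'
        · nlinarith [sq_nonneg (x 3 - x 4 + x 0 + x 1 - x 2), mul_nonneg h4 h1,
            mul_nonneg h0 (sub_nonneg.2 h3')]
        · have hle : x 2 ≤ x 3 := by linarith
          nlinarith [sq_nonneg (x 4 - x 0 + x 1 + x 2 - x 3), mul_nonneg h0 h2,
            mul_nonneg h1 (sub_nonneg.2 hle)]

/-- `L = M(cos²(4π/5), cos²(2π/5)) = M((3+√5)/8, (3−√5)/8)` is not completely positive: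
the Horn matrix `H = M(−1,1)` is copositive and `⟨L,H⟩ = 5(2−√5)/2 < 0`. -/
theorem L_not_completelyPositive :
    Mcirc (Real.cos (4 * π / 5) ^ 2) (Real.cos (2 * π / 5) ^ 2) =
      Mcirc ((3 + Real.sqrt 5) / 8) ((3 - Real.sqrt 5) / 8) ∧
    Copositive (Mcirc (-1) 1) ∧
    (∑ i : Fin 5, ∑ j : Fin 5,
        Mcirc (Real.cos (4 * π / 5) ^ 2) (Real.cos (2 * π / 5) ^ 2) i j * Mcirc (-1) 1 i j)
      = 5 * (2 - Real.sqrt 5) / 2 ∧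
    (∑ i : Fin 5, ∑ j : Fin 5,
        Mcirc (Real.cos (4 * π / 5) ^ 2) (Real.cos (2 * π / 5) ^ 2) i j * Mcirc (-1) 1 i j) < 0 ∧
    ¬ CompletelyPositive (Mcirc (Real.cos (4 * π / 5) ^ 2) (Real.cos (2 * π / 5) ^ 2)) := by
  have h5 : Real.sqrt 5 ^ 2 = 5 := Real.sq_sqrt (by norm_num)
  have h2lt : (2 : ℝ) < Real.sqrt 5 := by nlinarith [Real.sqrt_nonneg 5]
  have hval : (∑ i : Fin 5, ∑ j : Fin 5,
      Mcirc (Real.cos (4 * π / 5) ^ 2) (Real.cos (2 * π / 5) ^ 2) i j * Mcirc (-1) 1 i j)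
      = 5 * (2 - Real.sqrt 5) / 2 := by
    rw [inner_form, sq4', sq2']; ring
  have hneg : (∑ i : Fin 5, ∑ j : Fin 5,
      Mcirc (Real.cos (4 * π / 5) ^ 2) (Real.cos (2 * π / 5) ^ 2) i j * Mcirc (-1) 1 i j) < 0 := by
    rw [hval]; nlinarith
  refine ⟨by rw [sq4', sq2'], horn_copos, hval, hneg, ?_⟩
  rintro ⟨d, x, -, hxnn, hA⟩
  have key : 0 ≤ ∑ i : Fin 5, ∑ j : Fin 5,
      Mcirc (Real.cos (4 * π / 5) ^ 2) (Real.cos (2 * π / 5) ^ 2) i j * Mcirc (-1) 1 i j := by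
    have expand : ∀ k : Fin d,
        (fun i => x i k) ⬝ᵥ (Mcirc (-1) 1).mulVec (fun i => x i k)
          = ∑ i : Fin 5, ∑ j : Fin 5, x i k * x j k * Mcirc (-1) 1 i j := by
      intro k
      simp only [dotProduct, mulVec, Finset.mul_sum]
      exact Finset.sum_congr rfl fun i _ => Finset.sum_congr rfl fun j _ => by ring
    have step : (∑ i : Fin 5, ∑ j : Fin 5,
        Mcirc (Real.cos (4 * π / 5) ^ 2) (Real.cos (2 * π / 5) ^ 2) i j * Mcirc (-1) 1 i j)
        = ∑ k : Fin d, ∑ i : Fin 5, ∑ j : Fin 5, x i k * x j k * Mcirc (-1) 1 i j := by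
      simp only [hA, Finset.sum_mul]
      calc ∑ i : Fin 5, ∑ j : Fin 5, ∑ k : Fin d, x i k * x j k * Mcirc (-1) 1 i j
          = ∑ i : Fin 5, ∑ k : Fin d, ∑ j : Fin 5, x i k * x j k * Mcirc (-1) 1 i j :=
            Finset.sum_congr rfl fun i _ => Finset.sum_comm
        _ = ∑ k : Fin d, ∑ i : Fin 5, ∑ j : Fin 5, x i k * x j k * Mcirc (-1) 1 i j :=
            Finset.sum_comm
    rw [step]
    refine Finset.sum_nonneg fun k _ => ?_
    rw [← expand k]
    exact horn_copos (fun i => x i k) (fun i => hxnn i k)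
  linarith
end

section
/- Let A and B be positive semidefinite matrices partitioned conformally into 2×2 block form A = [[A₁, A₂],[A₂ᵀ, A₃]], B = [[B₁, B₂],[B₂ᵀ, B₃]]. If ⟨A, B⟩ = Tr(AB) = 0, then ⟨A₁, B₁⟩ = ⟨A₃, B₃⟩ = −⟨A₂, B₂⟩. -/
/-!
Write `A = XᴴX` and `B = YᴴY`. Then `tr (A * B) = tr ((XYᴴ)(XYᴴ)ᴴ)` is the squared Frobenius norm
of `XYᴴ`, so `⟨A, B⟩ = 0` forces `XYᴴ = 0` and hence `A * B = Xᴴ (XYᴴ) Y = 0`. The diagonal blocks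
of `A * B = 0` read `A₁B₁ + A₂B₂ᵀ = 0` and `A₂ᵀB₂ + A₃B₃ = 0`; take traces.
-/

open Matrix

open scoped MatrixOrder ComplexOrder in
theorem Matrix.PosSemidef.mul_eq_zero_of_trace_mul_eq_zero {n 𝕜 : Type*} [Fintype n] [RCLike 𝕜]
    {A B : Matrix n n 𝕜} (hA : A.PosSemidef) (hB : B.PosSemidef) (h : (A * B).trace = 0) :
    A * B = 0 := by
  classical
  obtain ⟨X, rfl⟩ := CStarAlgebra.nonneg_iff_eq_star_mul_self.mp hA.nonneg
  obtain ⟨Y, rfl⟩ := CStarAlgebra.nonneg_iff_eq_star_mul_self.mp hB.nonneg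
  simp only [star_eq_conjTranspose] at h ⊢
  have hXY : X * Yᴴ = 0 := by
    rw [← trace_mul_conjTranspose_self_eq_zero_iff, conjTranspose_mul, conjTranspose_conjTranspose,
      ← mul_assoc, trace_mul_comm]
    simpa only [mul_assoc] using h
  rw [show Xᴴ * X * (Yᴴ * Y) = Xᴴ * (X * Yᴴ) * Y by simp only [mul_assoc], hXY, mul_zero,
    zero_mul]

/-- If `A = [[A₁,A₂],[A₂ᵀ,A₃]]` and `B = [[B₁,B₂],[B₂ᵀ,B₃]]` are psd and `⟨A,B⟩ = 0`,
then `⟨A₁,B₁⟩ = ⟨A₃,B₃⟩ = −⟨A₂,B₂⟩`. -/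
theorem block_psd_orthogonal {m k : ℕ}
    (A₁ : Matrix (Fin m) (Fin m) ℝ) (A₂ : Matrix (Fin m) (Fin k) ℝ)
    (A₃ : Matrix (Fin k) (Fin k) ℝ)
    (B₁ : Matrix (Fin m) (Fin m) ℝ) (B₂ : Matrix (Fin m) (Fin k) ℝ)
    (B₃ : Matrix (Fin k) (Fin k) ℝ)
    (hA : (Matrix.fromBlocks A₁ A₂ A₂ᵀ A₃).PosSemidef)
    (hB : (Matrix.fromBlocks B₁ B₂ B₂ᵀ B₃).PosSemidef)
    (h0 : ((Matrix.fromBlocks A₁ A₂ A₂ᵀ A₃) * (Matrix.fromBlocks B₁ B₂ B₂ᵀ B₃)).trace = 0) :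
    (A₁ * B₁).trace = (A₃ * B₃).trace ∧ (A₁ * B₁).trace = -(A₂ᵀ * B₂).trace := by
  have hAB := hA.mul_eq_zero_of_trace_mul_eq_zero hB h0
  rw [fromBlocks_multiply, ← fromBlocks_zero, fromBlocks_inj] at hAB
  obtain ⟨h₁₁, -, -, h₂₂⟩ := hAB
  have h₂ : (A₂ * B₂ᵀ).trace = (A₂ᵀ * B₂).trace := by
    rw [← trace_transpose, transpose_mul, transpose_transpose, trace_mul_comm]
  have e₁ := congrArg trace h₁₁
  have e₃ := congrArg trace h₂₂
  simp only [trace_add, trace_zero, h₂] at e₁ e₃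
  constructor <;> linarith
end

section
/- Let A ∈ Sⁿ be a symmetric matrix whose support graph G(A) is bipartite. Then A is completely positive semidefinite if and only if A is completely positive. -/
open Matrix

open Finset Filter Topology

/-!
A completely psd matrix `A` is entrywise nonnegative, since `tr (X Y) ≥ 0` for psd `X, Y`, and
positive semidefinite, being a Gram matrix for the trace inner product. If the support graph is
bipartite, conjugating by the signature matrix `D = diag (±1)` of the bipartition turns `A` into
its comparison matrix, so `C(A) = D A D` is psd too, and `C(A + ε I) = C(A) + ε I` is positive
definite with nonpositive off-diagonal entries. For such a matrix `P` the vector `w = P⁻¹ 𝟙` is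
positive, and `diag w (A + ε I) diag w` is then diagonally dominant, hence a sum of nonnegative
rank-one matrices `e_p e_pᵀ` and `(e_p + e_q) (e_p + e_q)ᵀ`. The number of rank-one terms does not
depend on `ε` and their entries are bounded by the diagonal of `A + ε I`, so by compactness `A`
itself is completely positive. Conversely, nonnegative vectors give psd diagonal matrices.
-/

namespace Matrix

variable {m n : Type*}

section

variable [Fintype m] [Fintype n]

open scoped MatrixOrder ComplexOrder in
theorem PosSemidef.trace_mul_nonneg {𝕜 : Type*} [RCLike 𝕜] {X Y : Matrix n n 𝕜}
    (hX : X.PosSemidef) (hY : Y.PosSemidef) : 0 ≤ (X * Y).trace := by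
  classical
  obtain ⟨S, rfl⟩ := CStarAlgebra.nonneg_iff_eq_star_mul_self.mp hY.nonneg
  rw [← Matrix.mul_assoc, trace_mul_cycle, star_eq_conjTranspose]
  exact (hX.mul_mul_conjTranspose_same S).trace_nonneg

theorem posSemidef_trace_gram {X : m → Matrix n n ℝ} (hX : ∀ i, (X i).IsHermitian) :
    (Matrix.of fun i j => (X i * X j).trace).PosSemidef := by
  refine PosSemidef.of_dotProduct_mulVec_nonneg ?_ fun v => ?_
  · ext i j
    simp [trace_mul_comm (X i)]
  · set M := ∑ i, v i • X i
    have hM : Mᵀ = M := by simp [M, transpose_sum, (isHermitian_iff_isSymm.mp (hX _)).eq]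
    have : star v ⬝ᵥ (Matrix.of (fun i j => (X i * X j).trace) *ᵥ v) = (Mᴴ * M).trace := by
      simp only [M, hM, dotProduct, mulVec, of_apply, star_trivial, mul_sum, sum_mul,
        conjTranspose_eq_transpose_of_trivial, Matrix.mul_smul, smul_mul, trace_sum, trace_smul,
        smul_eq_mul]
      exact sum_congr rfl fun i _ => sum_congr rfl fun j _ => by rw [trace_mul_comm]; ring
    rw [this]
    exact (posSemidef_conjTranspose_mul_self M).trace_nonneg

theorem PosDef.nonneg_of_mulVec_nonneg {P : Matrix m m ℝ} (hP : P.PosDef)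
    (hoff : ∀ i j, i ≠ j → P i j ≤ 0) {w : m → ℝ} (hw : ∀ i, 0 ≤ (P *ᵥ w) i) (i : m) :
    0 ≤ w i := by
  set u : m → ℝ := fun i => max (w i) 0
  set v : m → ℝ := fun i => max (-w i) 0
  have hv : ∀ i, 0 ≤ v i := fun i => le_max_right _ _
  have huv : u - v = w := funext fun i => max_zero_sub_max_neg_zero_eq_self (w i)
  have hvPw : 0 ≤ v ⬝ᵥ (P *ᵥ w) := sum_nonneg fun i _ => mul_nonneg (hv i) (hw i)
  -- `u` and `v` have disjoint supports, so only off-diagonal entries of `P` meet them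
  have hvPu : v ⬝ᵥ (P *ᵥ u) ≤ 0 := by
    simp only [dotProduct, mulVec, mul_sum]
    refine sum_nonpos fun i _ => sum_nonpos fun j _ => ?_
    rcases eq_or_ne i j with rfl | hij
    · have : v i * u i = 0 := by
        simp only [u, v]; rcases le_total (w i) 0 with h | h <;> simp [h]
      linear_combination P i i * this
    · exact mul_nonpos_of_nonneg_of_nonpos (hv i)
        (mul_nonpos_of_nonpos_of_nonneg (hoff i j hij) (le_max_right _ _))
  have hvPv : v ⬝ᵥ (P *ᵥ v) ≤ 0 := by
    rw [← huv, mulVec_sub, dotProduct_sub] at hvPw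
    linarith
  have hv0 : v = 0 := by
    by_contra hne
    have := hP.dotProduct_mulVec_pos hne
    simp only [star_trivial] at this
    linarith
  simpa [v] using congrFun hv0 i

theorem PosDef.exists_pos_mulVec_eq_one [DecidableEq m] {P : Matrix m m ℝ} (hP : P.PosDef)
    (hoff : ∀ i j, i ≠ j → P i j ≤ 0) : ∃ w : m → ℝ, (∀ i, 0 < w i) ∧ P *ᵥ w = 1 := by
  set w := P⁻¹ *ᵥ 1
  have hPw : P *ᵥ w = 1 := by
    rw [mulVec_mulVec, mul_nonsing_inv _ ((isUnit_iff_isUnit_det P).mp hP.isUnit), one_mulVec]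
  have hw := hP.nonneg_of_mulVec_nonneg hoff (w := w) (by simp [hPw])
  refine ⟨w, fun i => ?_, hPw⟩
  have hrow : P i i * w i + ∑ j ∈ univ.erase i, P i j * w j = 1 := by
    rw [add_comm, sum_erase_add _ _ (mem_univ i)]
    exact congrFun hPw i
  have hrest : ∑ j ∈ univ.erase i, P i j * w j ≤ 0 :=
    sum_nonpos fun j hj =>
      mul_nonpos_of_nonpos_of_nonneg (hoff i j (ne_of_mem_erase hj).symm) (hw j)
  nlinarith [hP.diag_pos (i := i), hw i]

end

def HasNonnegFactor (A : Matrix m m ℝ) (ι : Type*) [Fintype ι] : Prop :=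
  ∃ X : Matrix m ι ℝ, (∀ i k, 0 ≤ X i k) ∧ A = X * Xᵀ

variable [DecidableEq m]

theorem HasNonnegFactor.of_forall_add_smul_one {A : Matrix m m ℝ}
    {ι : Type*} [Fintype ι] (h : ∀ ε : ℝ, 0 < ε → (A + ε • 1).HasNonnegFactor ι) :
    A.HasNonnegFactor ι := by
  set K : Set (Matrix m ι ℝ) := Set.univ.pi fun i => Set.univ.pi fun _ => Set.Icc 0 √(A i i + 1)
  have hK : IsClosed ((fun X : Matrix m ι ℝ => X * Xᵀ) '' K) :=
    ((isCompact_univ_pi fun _ => isCompact_univ_pi fun _ => isCompact_Icc).image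
      (continuous_id.matrix_mul continuous_id.matrix_transpose)).isClosed
  have hlim : Tendsto (fun ε : ℝ => A + ε • 1) (𝓝[>] 0) (𝓝 A) := by
    have hcont : Continuous fun ε : ℝ => A + ε • (1 : Matrix m m ℝ) := by fun_prop
    simpa using (hcont.tendsto 0).mono_left nhdsWithin_le_nhds
  have hmem : ∀ᶠ ε in 𝓝[>] (0 : ℝ), A + ε • 1 ∈ (fun X : Matrix m ι ℝ => X * Xᵀ) '' K := by
    filter_upwards [Ioc_mem_nhdsGT one_pos] with ε ⟨hε0, hε1⟩
    obtain ⟨X, hX, hXA⟩ := h ε hε0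
    refine ⟨X, fun i _ k _ => ⟨hX i k, ?_⟩, hXA.symm⟩
    have : X i k ^ 2 ≤ (X * Xᵀ) i i := by
      rw [mul_apply, sq]
      exact single_le_sum (f := fun k => X i k * Xᵀ k i) (fun k _ => mul_self_nonneg _) (mem_univ k)
    rw [← hXA] at this
    refine (le_abs_self _).trans (Real.abs_le_sqrt ?_)
    simpa using this.trans (by simpa using hε1)
  obtain ⟨X, hX, hXA⟩ := hK.mem_of_tendsto hlim hmem
  exact ⟨X, fun i k => (hX i (Set.mem_univ _) k (Set.mem_univ _)).1, hXA.symm⟩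

def comparison (A : Matrix m m ℝ) : Matrix m m ℝ :=
  of fun i j => if i = j then A i j else -A i j

theorem comparison_add_smul_one (A : Matrix m m ℝ) (c : ℝ) :
    comparison (A + c • 1) = comparison A + c • 1 := by
  ext i j
  by_cases h : i = j <;> simp [comparison, h]

variable [Fintype m]

theorem comparison_eq_diagonal_mul_mul_diagonal {A : Matrix m m ℝ}
    {f : m → Bool} (hf : ∀ i j, i ≠ j → A i j ≠ 0 → f i ≠ f j) :
    comparison A = diagonal (fun i => if f i then 1 else -1) * A *
      diagonal (fun i => if f i then 1 else -1) := by
  ext i j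
  simp only [comparison, of_apply, diagonal_mul, mul_diagonal]
  by_cases hij : i = j
  · subst hij; cases f i <;> simp
  by_cases hA : A i j = 0
  · simp [hA]
  have := hf i j hij hA
  cases hfi : f i <;> cases hfj : f j <;> simp_all

theorem PosSemidef.comparison_of_bipartite {A : Matrix m m ℝ}
    (hA : A.PosSemidef) {f : m → Bool} (hf : ∀ i j, i ≠ j → A i j ≠ 0 → f i ≠ f j) :
    (comparison A).PosSemidef := by
  rw [comparison_eq_diagonal_mul_mul_diagonal hf]
  simpa using hA.conjTranspose_mul_mul_same (diagonal fun i => if f i then (1 : ℝ) else -1)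

theorem HasNonnegFactor.diagonal_mul_mul_diagonal {A : Matrix m m ℝ}
    {ι : Type*} [Fintype ι] (h : A.HasNonnegFactor ι) {d : m → ℝ} (hd : ∀ i, 0 ≤ d i) :
    (diagonal d * A * diagonal d).HasNonnegFactor ι := by
  obtain ⟨X, hX, rfl⟩ := h
  refine ⟨diagonal d * X, fun i k => ?_, ?_⟩
  · simpa [diagonal_mul] using mul_nonneg (hd i) (hX i k)
  · simp [transpose_mul, Matrix.mul_assoc]

theorem sum_mul_single_add_single_mul (o : m → m → ℝ) (i j : m) :
    ∑ p, ∑ q, o p q * ((Pi.single p 1 + Pi.single q 1 : m → ℝ) i *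
      (Pi.single p 1 + Pi.single q 1 : m → ℝ) j) =
      (if i = j then ∑ q, o i q + ∑ p, o p i else 0) + o i j + o j i := by
  simp only [Pi.add_apply, Pi.single_apply, mul_add, mul_ite, mul_one, mul_zero, sum_add_distrib,
    sum_ite_irrel, sum_const_zero, sum_ite_eq, mem_univ, if_true]
  rcases eq_or_ne i j with rfl | hij
  · simp only [if_true]
    ring
  · simp only [hij, if_false, add_zero, zero_add]
    ring

theorem hasNonnegFactor_of_diagDominant {C : Matrix m m ℝ} (hC : C.IsSymm)
    (hnn : ∀ i j, 0 ≤ C i j) (hdom : ∀ i, ∑ j ∈ univ.erase i, C i j ≤ C i i) :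
    C.HasNonnegFactor (m ⊕ m × m) := by
  set r : m → ℝ := fun i => C i i - ∑ j ∈ univ.erase i, C i j with hr_def
  have hr : ∀ i, 0 ≤ r i := fun i => sub_nonneg.mpr (hdom i)
  clear_value r
  set o : m → m → ℝ := fun p q => if p = q then 0 else C p q
  have ho : ∀ p q, 0 ≤ o p q / 2 := fun p q => by
    by_cases h : p = q
    · simp [o, h]
    · simpa [o, h] using div_nonneg (hnn p q) zero_le_two
  have hrow : ∀ i, ∑ q, o i q = ∑ j ∈ univ.erase i, C i j := fun i => by
    rw [← sum_erase univ (f := o i) (a := i) (by simp [o])]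
    exact sum_congr rfl fun j hj => if_neg (ne_of_mem_erase hj).symm
  have hcol : ∀ i, ∑ p, o p i = ∑ q, o i q := fun i =>
    sum_congr rfl fun p _ => by simp only [o, eq_comm, hC.apply]
  -- columns: `√(r p) e_p` for the diagonal excess, `√(C p q / 2) (e_p + e_q)` per ordered pair
  refine ⟨of fun i => Sum.elim (fun p => √(r p) * (Pi.single p 1 : m → ℝ) i)
    (fun pq => √(o pq.1 pq.2 / 2) * (Pi.single pq.1 1 + Pi.single pq.2 1 : m → ℝ) i), ?_, ?_⟩
  · rintro i (p | ⟨p, q⟩)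
    · simp only [of_apply, Sum.elim_inl, Pi.single_apply]; positivity
    · simp only [of_apply, Sum.elim_inr, Pi.add_apply, Pi.single_apply]; positivity
  · ext i j
    have hpair : ∀ p q : m, √(o p q / 2) * (Pi.single p 1 + Pi.single q 1 : m → ℝ) i *
        (√(o p q / 2) * (Pi.single p 1 + Pi.single q 1 : m → ℝ) j) =
        o p q / 2 * ((Pi.single p 1 + Pi.single q 1 : m → ℝ) i *
          (Pi.single p 1 + Pi.single q 1 : m → ℝ) j) := fun p q => by
      linear_combination ((Pi.single p 1 + Pi.single q 1 : m → ℝ) i *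
          (Pi.single p 1 + Pi.single q 1 : m → ℝ) j) * Real.mul_self_sqrt (ho p q)
    have hdiag : ∑ p, √(r p) * (Pi.single p 1 : m → ℝ) i * (√(r p) * (Pi.single p 1 : m → ℝ) j)
        = if i = j then r i else 0 := by
      rcases eq_or_ne i j with rfl | hij
      · simp [Pi.single_apply, Real.mul_self_sqrt (hr i)]
      · simp [Pi.single_apply, hij]
    simp only [mul_apply, transpose_apply, of_apply, Fintype.sum_sum_type, Sum.elim_inl,
      Sum.elim_inr, Fintype.sum_prod_type, hpair, sum_mul_single_add_single_mul, hdiag]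
    rcases eq_or_ne i j with rfl | hij
    · simp only [if_true, ← sum_div, hcol, hrow, hr_def, o]
      ring
    · simp only [hij, hij.symm, if_false, o, hC.apply i j]
      ring

theorem hasNonnegFactor_of_comparison_posDef {B : Matrix m m ℝ}
    (hB : B.IsSymm) (hnn : ∀ i j, 0 ≤ B i j) (hP : (comparison B).PosDef) :
    B.HasNonnegFactor (m ⊕ m × m) := by
  obtain ⟨w, hw, hPw⟩ := hP.exists_pos_mulVec_eq_one fun i j hij => by
    simpa [comparison, hij] using hnn i j
  set C := diagonal w * B * diagonal w
  have hdom : ∀ i, ∑ j ∈ univ.erase i, C i j ≤ C i i := by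
    intro i
    have hrow := congrFun hPw i
    rw [mulVec, dotProduct, ← sum_erase_add _ _ (mem_univ i)] at hrow
    have hsum : ∑ x ∈ univ.erase i, B i x * w x = B i i * w i - 1 := by
      have hoff : ∑ x ∈ univ.erase i, comparison B i x * w x =
          -∑ x ∈ univ.erase i, B i x * w x := by
        rw [← sum_neg_distrib]
        exact sum_congr rfl fun x hx => by simp [comparison, (ne_of_mem_erase hx).symm]
      rw [hoff] at hrow
      simp only [comparison, of_apply, if_true, Pi.one_apply] at hrow
      linarith
    simp only [C, diagonal_mul, mul_diagonal, mul_assoc, ← mul_sum, hsum]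
    exact mul_le_mul_of_nonneg_left (by linarith) (hw i).le
  have hCsymm : C.IsSymm := by simp [C, IsSymm, transpose_mul, hB.eq, Matrix.mul_assoc]
  have hCnn : ∀ i j, 0 ≤ C i j := fun i j => by
    simpa [C, diagonal_mul, mul_diagonal] using
      mul_nonneg (mul_nonneg (hw i).le (hnn i j)) (hw j).le
  have hC := (hasNonnegFactor_of_diagDominant hCsymm hCnn hdom).diagonal_mul_mul_diagonal
    (d := w⁻¹) fun i => (inv_pos.mpr (hw i)).le
  have hw1 : diagonal w⁻¹ * diagonal w = 1 := by
    rw [diagonal_mul_diagonal, ← diagonal_one]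
    exact congrArg diagonal (funext fun i => inv_mul_cancel₀ (hw i).ne')
  have hw2 : diagonal w * diagonal w⁻¹ = 1 := by
    rw [diagonal_mul_diagonal, ← diagonal_one]
    exact congrArg diagonal (funext fun i => mul_inv_cancel₀ (hw i).ne')
  convert hC using 1
  calc B = diagonal w⁻¹ * diagonal w * B * (diagonal w * diagonal w⁻¹) := by
        rw [hw1, hw2, Matrix.one_mul, Matrix.mul_one]
    _ = _ := by simp only [C, Matrix.mul_assoc]

theorem PosSemidef.hasNonnegFactor_of_bipartite {A : Matrix m m ℝ}
    (hA : A.PosSemidef) (hnn : ∀ i j, 0 ≤ A i j) {f : m → Bool}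
    (hf : ∀ i j, i ≠ j → A i j ≠ 0 → f i ≠ f j) : A.HasNonnegFactor (m ⊕ m × m) := by
  refine HasNonnegFactor.of_forall_add_smul_one fun ε hε =>
    hasNonnegFactor_of_comparison_posDef ?_ (fun i j => ?_) ?_
  · exact (isHermitian_iff_isSymm.mp hA.1).add (isSymm_one.smul ε)
  · by_cases h : i = j
    · subst h; simpa using add_nonneg (hnn i i) hε.le
    · simpa [h] using hnn i j
  · rw [comparison_add_smul_one]
    exact PosDef.posSemidef_add (hA.comparison_of_bipartite hf) (PosDef.one.smul hε)

theorem HasNonnegFactor.completelyPositive {n : ℕ} {A : Matrix (Fin n) (Fin n) ℝ} {ι : Type*}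
    [Fintype ι] (h : A.HasNonnegFactor ι) : CompletelyPositive A := by
  obtain ⟨X, hX, rfl⟩ := h
  set e := Fintype.equivFin (Option ι)
  refine ⟨Fintype.card (Option ι), fun i k => (e.symm k).elim 0 (X i), Fintype.card_pos,
    fun i k => ?_, fun i j => ?_⟩
  · cases h : e.symm k <;> simp [h, hX]
  · rw [e.symm.sum_comp (fun o => o.elim 0 (X i) * o.elim 0 (X j)), Fintype.sum_option]
    simp [mul_apply]

end Matrix

theorem CompletelyPSD.posSemidef {n : ℕ} {A : Matrix (Fin n) (Fin n) ℝ} (h : CompletelyPSD A) :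
    A.PosSemidef := by
  obtain ⟨d, X, -, hX, hA⟩ := h
  rw [show A = of fun i j => (X i * X j).trace from ext hA]
  exact posSemidef_trace_gram fun i => (hX i).isHermitian

theorem CompletelyPSD.nonneg {n : ℕ} {A : Matrix (Fin n) (Fin n) ℝ} (h : CompletelyPSD A)
    (i j : Fin n) : 0 ≤ A i j := by
  obtain ⟨d, X, -, hX, hA⟩ := h
  exact hA i j ▸ (hX i).trace_mul_nonneg (hX j)

theorem CompletelyPositive.completelyPSD {n : ℕ} {A : Matrix (Fin n) (Fin n) ℝ}
    (h : CompletelyPositive A) : CompletelyPSD A := by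
  obtain ⟨d, x, hd, hx, hA⟩ := h
  refine ⟨d, fun i => diagonal (x i), hd, fun i => posSemidef_diagonal_iff.mpr (hx i),
    fun i j => ?_⟩
  rw [hA i j, diagonal_mul_diagonal, trace_diagonal]

theorem bipartite_csplus_iff_cp_general {n : ℕ} (A : Matrix (Fin n) (Fin n) ℝ)
    (hbip : ∃ f : Fin n → Bool, ∀ i j, i ≠ j → A i j ≠ 0 → f i ≠ f j) :
    CompletelyPSD A ↔ CompletelyPositive A := by
  obtain ⟨f, hf⟩ := hbip
  refine ⟨fun h => ?_, CompletelyPositive.completelyPSD⟩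
  exact (h.posSemidef.hasNonnegFactor_of_bipartite h.nonneg hf).completelyPositive

/-- If `A` is symmetric and its support graph (edges `{i,j}` with `i ≠ j`, `A i j ≠ 0`)
is bipartite, then `A` is completely psd iff `A` is completely positive. -/
theorem bipartite_csplus_iff_cp {n : ℕ} (A : Matrix (Fin n) (Fin n) ℝ)
    (hsym : A.IsSymm)
    (hbip : ∃ f : Fin n → Bool, ∀ i j, i ≠ j → A i j ≠ 0 → f i ≠ f j) :
    CompletelyPSD A ↔ CompletelyPositive A :=
  bipartite_csplus_iff_cp_general A hbip
end

section
/- For odd n ≥ 5, any symmetric matrix A ∈ Sⁿ with support graph equal to the n-cycle Cₙ and rank n−2 is not completely positive semidefinite. -/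
open Matrix

/-!
Write `A i j = tr (X i * X j)` with every `X i` positive semidefinite. As `A` is singular, some
`v ≠ 0` has `A v = 0`; then `S = ∑ vᵢ Xᵢ` has `tr (S * S) = vᵀ A v = 0`, so `S = 0`.
For positive semidefinite matrices `tr (P * Q) = 0` forces `P * Q = 0`, so in
`0 = tr (S * Xⱼ * Xⱼ₊₁) = ∑ vᵢ tr (Xᵢ Xⱼ Xⱼ₊₁)` every term with `i ∉ {j, j + 1}` vanishes (for
`i = j - 1` because `j - 1` and `j + 1` are not adjacent on a cycle of length at least 4), leaving
`vⱼ tr (Xⱼ Xⱼ₊₁ Xⱼ) + vⱼ₊₁ tr (Xⱼ₊₁ Xⱼ Xⱼ₊₁) = 0` with both traces positive. Hence a nonzero entry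
of `v` forces the next one to be nonzero of the opposite sign, which is impossible around a cycle
of odd length.
-/

namespace Matrix.PosSemidef

variable {m : Type*} [Fintype m] {P Q : Matrix m m ℝ}

open scoped MatrixOrder in
theorem exists_eq_conjTranspose_mul_self (hP : P.PosSemidef) : ∃ B : Matrix m m ℝ, P = Bᴴ * B := by
  classical
  obtain ⟨B, rfl⟩ := CStarAlgebra.nonneg_iff_eq_star_mul_self.mp hP.nonneg
  exact ⟨B, rfl⟩

theorem mul_eq_zero_of_trace_mul_eq_zero_s8 (hP : P.PosSemidef) (hQ : Q.PosSemidef)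
    (h : (P * Q).trace = 0) : P * Q = 0 := by
  obtain ⟨C, rfl⟩ := hP.exists_eq_conjTranspose_mul_self
  obtain ⟨B, rfl⟩ := hQ.exists_eq_conjTranspose_mul_self
  have hCB : C * Bᴴ = 0 := by
    rw [← trace_conjTranspose_mul_self_eq_zero_iff, ← h, conjTranspose_mul,
      conjTranspose_conjTranspose, trace_mul_comm (Cᴴ * C)]
    simp only [mul_assoc]
    rw [trace_mul_comm Bᴴ]
    simp only [mul_assoc]
  simp only [mul_assoc, ← mul_assoc C, hCB, zero_mul, mul_zero]

theorem trace_mul_mul_pos_of_trace_mul_ne_zero (hP : P.PosSemidef) (hQ : Q.PosSemidef)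
    (h : (P * Q).trace ≠ 0) : 0 < (P * Q * P).trace := by
  obtain ⟨B, rfl⟩ := hQ.exists_eq_conjTranspose_mul_self
  have hPQP : P * (Bᴴ * B) * P = (B * P)ᴴ * (B * P) := by
    rw [conjTranspose_mul, hP.1.eq]; simp only [mul_assoc]
  rw [hPQP]
  refine (posSemidef_conjTranspose_mul_self _).trace_nonneg.lt_of_ne' fun h0 => h ?_
  rw [trace_conjTranspose_mul_self_eq_zero_iff] at h0
  rw [trace_mul_comm, mul_assoc, h0, mul_zero, trace_zero]

end Matrix.PosSemidef

namespace Matrix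

variable {ι m : Type*} [Fintype m]

theorem det_eq_zero_of_rank_lt {K : Type*} [Fintype ι] [DecidableEq ι] [Field K]
    {A : Matrix ι ι K} (h : A.rank < Fintype.card ι) : A.det = 0 := by
  by_contra hdet
  exact h.ne (A.rank_of_isUnit ((A.isUnit_iff_isUnit_det).mpr (isUnit_iff_ne_zero.mpr hdet)))

def traceGram (X : ι → Matrix m m ℝ) : Matrix ι ι ℝ :=
  of fun i j => (X i * X j).trace

@[simp]
theorem traceGram_apply (X : ι → Matrix m m ℝ) (i j : ι) : traceGram X i j = (X i * X j).trace :=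
  rfl

theorem sum_smul_eq_zero_of_traceGram_mulVec_eq_zero [Fintype ι] {X : ι → Matrix m m ℝ}
    (hX : ∀ i, (X i).IsHermitian) {v : ι → ℝ} (hv : traceGram X *ᵥ v = 0) :
    ∑ i, v i • X i = 0 := by
  set S := ∑ i, v i • X i
  have hS : Sᴴ = S := by
    simp only [S, conjTranspose_sum, conjTranspose_smul, (hX _).eq, star_trivial]
  have hquad : (Sᴴ * S).trace = v ⬝ᵥ (traceGram X *ᵥ v) := by
    rw [hS]
    simp only [S, Finset.sum_mul, Finset.mul_sum, smul_mul_assoc, mul_smul_comm, trace_sum,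
      trace_smul, smul_eq_mul, mulVec, dotProduct, traceGram_apply]
    exact Finset.sum_congr rfl fun i _ => Finset.sum_congr rfl fun j _ => by
      rw [trace_mul_comm]; ring
  rwa [hv, dotProduct_zero, trace_conjTranspose_mul_self_eq_zero_iff] at hquad

end Matrix

open Fin.CommRing in
theorem Fin.add_natCast_ne_self {n k : ℕ} [NeZero n] (j : Fin n) (hk : 0 < k) (hkn : k < n) :
    j + (k : Fin n) ≠ j := by
  rw [Ne, add_eq_left, Fin.natCast_eq_zero]
  exact Nat.not_dvd_of_pos_of_lt hk hkn

open Fin.CommRing in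
theorem Fin.forall_of_add_one {n : ℕ} [NeZero n] {p : Fin n → Prop} {j₀ : Fin n} (h₀ : p j₀)
    (hstep : ∀ j, p j → p (j + 1)) (i : Fin n) : p i := by
  have hk : ∀ k : ℕ, p (j₀ + (k : Fin n)) := by
    intro k
    induction k with
    | zero => simpa using h₀
    | succ k ih => simpa [Nat.cast_succ, add_assoc] using hstep _ ih
  simpa using hk (i - j₀).val

theorem eq_zero_of_mul_add_one_neg {n : ℕ} [NeZero n] (hodd : Odd n) {v : Fin n → ℝ}
    (hv : ∀ j, v j ≠ 0 → v j * v (j + 1) < 0) : v = 0 := by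
  by_contra hne
  obtain ⟨j₀, hj₀⟩ := Function.ne_iff.mp hne
  have hall : ∀ i, v i ≠ 0 :=
    Fin.forall_of_add_one hj₀ fun j hj h => (hv j hj).ne (by rw [h, mul_zero])
  have hsq : ∏ j, v j * v (j + 1) = (∏ j, v j) ^ 2 := by
    rw [Finset.prod_mul_distrib, sq,
      Fintype.prod_equiv (Equiv.addRight (1 : Fin n)) (fun j => v (j + 1)) v fun _ => rfl]
  have hneg : ∏ j, -(v j * v (j + 1)) = -∏ j, v j * v (j + 1) := by
    rw [Finset.prod_neg, Finset.card_univ, Fintype.card_fin, hodd.neg_one_pow, neg_one_mul]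
  have hpos : 0 < ∏ j, -(v j * v (j + 1)) :=
    Finset.prod_pos fun j _ => neg_pos.mpr (hv j (hall j))
  rw [hneg, hsq] at hpos
  linarith [sq_nonneg (∏ j, v j)]

def Matrix.HasCycleSupport {R : Type*} [Zero R] {n : ℕ} [NeZero n] (A : Matrix (Fin n) (Fin n) R) :
    Prop :=
  ∀ i j, i ≠ j → (A i j ≠ 0 ↔ (j = i + 1 ∨ i = j + 1))

namespace Matrix.HasCycleSupport

variable {m : Type*} [Fintype m] {n : ℕ} [NeZero n] {X : Fin n → Matrix m m ℝ}

theorem mul_eq_zero_of_not_adj (hG : HasCycleSupport (traceGram X))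
    (hX : ∀ i, (X i).PosSemidef) {i j : Fin n} (hij : i ≠ j) (hji : j ≠ i + 1)
    (hij' : i ≠ j + 1) : X i * X j = 0 :=
  (hX i).mul_eq_zero_of_trace_mul_eq_zero_s8 (hX j) <| not_not.mp fun h =>
    ((hG i j hij).mp h).elim hji hij'

open Fin.CommRing in
theorem trace_mul_mul_add_one_eq_zero (hG : HasCycleSupport (traceGram X)) (hn : 4 ≤ n)
    (hX : ∀ i, (X i).PosSemidef) {i j : Fin n} (hij : i ≠ j) (hij' : i ≠ j + 1) :
    (X i * X j * X (j + 1)).trace = 0 := by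
  by_cases hji : j = i + 1
  · subst hji
    have hne : ∀ k : ℕ, 0 < k → k < n → i + k ≠ i := fun _ => i.add_natCast_ne_self
    have h2 : X (i + 1 + 1) * X i = 0 := hG.mul_eq_zero_of_not_adj hX
      (fun h => hne 2 (by norm_num) (by omega) (by push_cast; linear_combination h))
      (fun h => hne 3 (by norm_num) (by omega) (by push_cast; linear_combination -h))
      (fun h => hne 1 (by norm_num) (by omega) (by push_cast; linear_combination h))
    rw [trace_mul_cycle, h2, zero_mul, trace_zero]
  · rw [hG.mul_eq_zero_of_not_adj hX hij hji hij', zero_mul, trace_zero]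

open Fin.CommRing in
theorem mul_add_one_neg_of_sum_smul_eq_zero (hG : HasCycleSupport (traceGram X)) (hn : 4 ≤ n)
    (hX : ∀ i, (X i).PosSemidef) {v : Fin n → ℝ} (hv : ∑ i, v i • X i = 0) (j : Fin n)
    (hvj : v j ≠ 0) : v j * v (j + 1) < 0 := by
  have hj : j ≠ j + 1 := fun h =>
    j.add_natCast_ne_self (k := 1) one_pos (by omega) (by push_cast; linear_combination -h)
  have hadj : (X j * X (j + 1)).trace ≠ 0 := (hG j (j + 1) hj).mpr (Or.inl rfl)
  have hrel : v j * (X j * X (j + 1) * X j).trace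
      + v (j + 1) * (X (j + 1) * X j * X (j + 1)).trace = 0 := by
    have h0 : ((∑ i, v i • X i) * (X j * X (j + 1))).trace = 0 := by
      rw [hv, zero_mul, trace_zero]
    simp only [Finset.sum_mul, trace_sum, smul_mul_assoc, trace_smul, smul_eq_mul] at h0
    rw [← Finset.sum_subset (Finset.subset_univ {j, j + 1}), Finset.sum_pair hj] at h0
    · rwa [trace_mul_comm (X j), ← mul_assoc (X (j + 1))] at h0
    · intro i _ hi
      simp only [Finset.mem_insert, Finset.mem_singleton, not_or] at hi
      rw [← mul_assoc, hG.trace_mul_mul_add_one_eq_zero hn hX hi.1 hi.2, mul_zero]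
  have hs := (hX j).trace_mul_mul_pos_of_trace_mul_ne_zero (hX (j + 1)) hadj
  have ht := (hX (j + 1)).trace_mul_mul_pos_of_trace_mul_ne_zero (hX j)
    (by rwa [trace_mul_comm])
  have hprod : v j * v (j + 1) * (X (j + 1) * X j * X (j + 1)).trace
      = -((X j * X (j + 1) * X j).trace * (v j * v j)) := by
    linear_combination v j * hrel
  exact neg_of_mul_neg_left (hprod ▸ neg_neg_of_pos (mul_pos hs (mul_self_pos.mpr hvj))) ht.le

end Matrix.HasCycleSupport

theorem cycle_rank_not_csplus_general {n : ℕ} [NeZero n] (hodd : Odd n) (hn : 5 ≤ n)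
    (A : Matrix (Fin n) (Fin n) ℝ)
    (hcyc : ∀ i j : Fin n, i ≠ j → (A i j ≠ 0 ↔ (j = i + 1 ∨ i = j + 1)))
    (hrank : A.rank = n - 2) :
    ¬ CompletelyPSD A := by
  rintro ⟨d, X, -, hX, hA⟩
  obtain rfl : A = traceGram X := Matrix.ext hA
  have hG : HasCycleSupport (traceGram X) := hcyc
  obtain ⟨v, hv, hGv⟩ := exists_mulVec_eq_zero_iff.mpr <|
    det_eq_zero_of_rank_lt (by rw [hrank, Fintype.card_fin]; omega)
  have hS := sum_smul_eq_zero_of_traceGram_mulVec_eq_zero (fun i => (hX i).1) hGv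
  exact hv <| eq_zero_of_mul_add_one_neg hodd <|
    hG.mul_add_one_neg_of_sum_smul_eq_zero (by omega) hX hS

/-- For odd `n ≥ 5`, a symmetric matrix `A` whose support graph equals the `n`-cycle
`Cₙ` and which has rank `n − 2` is not completely positive semidefinite. -/
theorem cycle_rank_not_csplus {n : ℕ} [NeZero n] (hodd : Odd n) (hn : 5 ≤ n)
    (A : Matrix (Fin n) (Fin n) ℝ) (hsym : A.IsSymm)
    (hcyc : ∀ i j : Fin n, i ≠ j → (A i j ≠ 0 ↔ (j = i + 1 ∨ i = j + 1)))
    (hrank : A.rank = n - 2) :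
    ¬ CompletelyPSD A :=
  cycle_rank_not_csplus_general hodd hn A hcyc hrank
end

section
/- Let 𝒩 be a finite von Neumann algebra with faithful trace τ. There do not exist positive elements A₁,…,A₅ ∈ 𝒩 such that W = (τ(A_i A_j))_{i,j=1}^5, where W = M((√5−1)/2, 0) is the 5×5 circulant matrix with diagonal 1, first off-diagonals (√5−1)/2, and second off-diagonals 0. -/
open Matrix

set_option maxHeartbeats 1600000 in
/-- In a finite von Neumann algebra `N` with faithful trace `τ`, there is no
Gram representation of the matrix `W = M((√5−1)/2, 0)` by positive elements. -/
theorem no_tracial_gram_repr_of_W {N : Type*} [Ring N] [StarRing N] [Algebra ℝ N]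
    (τ : N →ₗ[ℝ] ℝ)
    (htracial : ∀ a b : N, τ (a * b) = τ (b * a))
    (hpos : ∀ a : N, 0 ≤ τ (star a * a))
    (hfaithful : ∀ a : N, τ (star a * a) = 0 → a = 0)
    (hzeroprod : ∀ a b : N, (∃ x, a = star x * x) → (∃ y, b = star y * y) →
      τ (a * b) = 0 → a * b = 0) :
    ¬ ∃ A : Fin 5 → N, (∀ i, ∃ x, A i = star x * x) ∧
        ∀ i j, τ (A i * A j) = Mcirc ((Real.sqrt 5 - 1) / 2) 0 i j := by
  rintro ⟨A, hsq, hgram⟩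
  set s : ℝ := Real.sqrt 5 with hs_def
  have hs5 : s * s = 5 := Real.mul_self_sqrt (by norm_num)
  have hs0 : 0 ≤ s := Real.sqrt_nonneg 5
  have hs2 : 2 ≤ s := by nlinarith
  have hs3 : s ≤ 3 := by nlinarith
  have hA : ∀ i, star (A i) = A i := by
    intro i; obtain ⟨x, hx⟩ := hsq i; rw [hx, StarMul.star_mul, star_star]
  have hgram2 : ∀ (m a b : Fin 5),
      τ (A (m + a) * A (m + b)) = Mcirc ((s - 1)/2) 0 a b := by
    intro m a b
    rw [hgram]
    simp [Mcirc, add_right_inj, add_sub_add_left_eq_sub]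
  have horth : ∀ m : Fin 5, A m * A (m + 2) = 0 := by
    intro m
    apply hzeroprod _ _ (hsq m) (hsq (m + 2))
    have h := hgram2 m 0 2
    rw [add_zero] at h
    rw [h]
    simp only [Mcirc, Matrix.of_apply]
    rw [if_neg (by decide), if_neg (by decide)]
  have horth' : ∀ m : Fin 5, A (m + 2) * A m = 0 := by
    intro m
    have h := congrArg star (horth m)
    rwa [StarMul.star_mul, hA, hA, star_zero] at h
  have o13 : A 1 * A 3 = 0 := by simpa using horth 1
  have o24 : A 2 * A 4 = 0 := by simpa using horth 2
  have o02 : A 0 * A 2 = 0 := by simpa using horth 0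
  have o42 : A 4 * A 2 = 0 := by simpa using horth' 2
  have o03 : A 0 * A 3 = 0 := by simpa using horth' 3

  have hmap5 : star (algebraMap ℝ N 5) = algebraMap ℝ N 5 := by
    rw [_root_.map_ofNat]; exact star_ofNat 5
  have hτalg : ∀ r : ℝ, τ (algebraMap ℝ N r) = r * τ 1 := by
    intro r
    rw [Algebra.algebraMap_eq_smul_one, _root_.map_smul, smul_eq_mul]
  have hE : star (algebraMap ℝ N s) = algebraMap ℝ N s := by
    set e : N := algebraMap ℝ N s with he_def
    have he2 : e * e = algebraMap ℝ N 5 := by rw [he_def, ← _root_.map_mul, hs5]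
    have hf2 : star e * star e = algebraMap ℝ N 5 := by
      have h := congrArg star he2
      rwa [StarMul.star_mul, hmap5] at h
    have hcom : ∀ x : N, x * e = e * x := fun x => (Algebra.commutes s x).symm
    have hcomf : ∀ x : N, x * star e = star e * x := by
      intro x
      have h := congrArg star (hcom (star x))
      rw [StarMul.star_mul, StarMul.star_mul, star_star] at h
      exact h.symm
    have h1 : e * (star e * e) = star e * (e * e) := by
      rw [← mul_assoc, hcomf e, mul_assoc]
    have huu : (star e * e) * (star e * e) = algebraMap ℝ N 25 := by
      calc (star e * e) * (star e * e) = star e * (e * (star e * e)) := by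
            rw [mul_assoc]
        _ = star e * (star e * (e * e)) := by rw [h1]
        _ = (star e * star e) * (e * e) := by rw [mul_assoc]
        _ = algebraMap ℝ N 25 := by rw [hf2, he2, ← _root_.map_mul]; norm_num
    have hu_star : star (star e * e) = star e * e := by
      rw [StarMul.star_mul, star_star]
    have hw_star : star (algebraMap ℝ N 5 - star e * e) = algebraMap ℝ N 5 - star e * e := by
      rw [star_sub, hmap5, hu_star]
    have hww : (algebraMap ℝ N 5 - star e * e) * (algebraMap ℝ N 5 - star e * e)
        = algebraMap ℝ N 10 * (algebraMap ℝ N 5 - star e * e) := by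
      have hcu : algebraMap ℝ N 5 * (star e * e) = (star e * e) * algebraMap ℝ N 5 :=
        Algebra.commutes 5 (star e * e)
      have h55 : algebraMap ℝ N 5 * algebraMap ℝ N 5 = algebraMap ℝ N 25 := by
        rw [← _root_.map_mul]; norm_num
      have h50 : algebraMap ℝ N 10 * algebraMap ℝ N 5 = algebraMap ℝ N 25 + algebraMap ℝ N 25 := by
        rw [← _root_.map_mul, ← _root_.map_add]; norm_num
      have h10 : algebraMap ℝ N 10 * (star e * e)
          = algebraMap ℝ N 5 * (star e * e) + algebraMap ℝ N 5 * (star e * e) := by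
        rw [← add_mul, ← _root_.map_add]; norm_num
      rw [sub_mul, mul_sub, mul_sub, huu, h55, ← hcu, mul_sub, h50, h10]
      abel
    have hτw : 0 ≤ (5:ℝ) * τ 1 - τ (star e * e) := by
      have h := hpos (algebraMap ℝ N 5 - star e * e)
      rw [hw_star, hww, show algebraMap ℝ N 10 * (algebraMap ℝ N 5 - star e * e)
            = (10:ℝ) • (algebraMap ℝ N 5 - star e * e) from (Algebra.smul_def 10 _).symm,
          _root_.map_smul, smul_eq_mul, _root_.map_sub, hτalg] at h
      linarith
    have hd_star : star (star e - e) = -(star e - e) := by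
      rw [star_sub, star_star, ← neg_sub]
    have hdd : star (star e - e) * (star e - e) = (2:ℝ) • (star e * e) - algebraMap ℝ N 10 := by
      rw [hd_star, neg_mul, sub_mul, mul_sub, mul_sub, hf2, he2, show e * star e = star e * e from hcomf e,
        two_smul ℝ (star e * e), show algebraMap ℝ N 10 = algebraMap ℝ N 5 + algebraMap ℝ N 5 by
          rw [← _root_.map_add]; norm_num]
      abel
    have hτd : τ (star (star e - e) * (star e - e)) = 2 * τ (star e * e) - 10 * τ 1 := by
      rw [hdd, _root_.map_sub, _root_.map_smul, smul_eq_mul, hτalg]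
    have hzero : τ (star (star e - e) * (star e - e)) = 0 := by
      have h1 := hpos (star e - e)
      rw [hτd] at h1 ⊢
      linarith
    have hd0 := hfaithful _ hzero
    have := sub_eq_zero.mp hd0
    exact this

  have hsmul : ∀ (r : ℝ), star (algebraMap ℝ N r) = algebraMap ℝ N r →
      ∀ (x : N), star (r • x) = r • star x := by
    intro r hr x
    rw [Algebra.smul_def, StarMul.star_mul, hr, ← Algebra.commutes, ← Algebra.smul_def]
  have hmap4 : star (algebraMap ℝ N 4) = algebraMap ℝ N 4 := by
    rw [_root_.map_ofNat]; exact star_ofNat 4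
  have hc1 : star (algebraMap ℝ N (5 + s)) = algebraMap ℝ N (5 + s) := by
    rw [_root_.map_add, star_add, hE, _root_.map_ofNat, star_ofNat]
  have hc0 : star (algebraMap ℝ N (-(4 * s))) = algebraMap ℝ N (-(4 * s)) := by
    rw [map_neg, _root_.map_mul, star_neg, StarMul.star_mul, hE, hmap4, Algebra.commutes]
  have hc2 : star (algebraMap ℝ N (-5 + s)) = algebraMap ℝ N (-5 + s) := by
    rw [_root_.map_add, map_neg, star_add, star_neg, hE, _root_.map_ofNat, star_ofNat]
  set z : Fin 5 → N := fun m => (5 + s) • (A (m + 1) + A (m + 4)) + (-(4 * s)) • A (m + 0)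
      + (-5 + s) • (A (m + 2) + A (m + 3)) with hz_def
  have hzstar : ∀ m, star (z m) = z m := by
    intro m
    simp only [hz_def, star_add, hsmul _ hc1, hsmul _ hc0, hsmul _ hc2, hA]
  have hzz : ∀ m, τ (z m * z m) = 0 := by
    intro m
    simp only [hz_def, mul_add, add_mul, smul_mul_assoc, mul_smul_comm, smul_smul,
      _root_.map_add, _root_.map_smul, smul_eq_mul, hgram2]
    simp only [Mcirc, Matrix.of_apply]
    simp +decide only []
    norm_num
    linear_combination (-5*s - 25) * hs5
  have hz0 : ∀ m, z m = 0 := by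
    intro m
    apply hfaithful
    rw [hzstar m]
    exact hzz m

  have h243 : A 2 * (A 4 * A 3) = 0 := by rw [← mul_assoc, o24, zero_mul]
  have E2a : (5 + s) * τ (A 2 * (A 2 * A 2)) + (-(4 * s)) * τ (A 2 * (A 3 * A 2))
      + (-5 + s) * τ (A 2 * (A 1 * A 2)) = 0 := by
    have hexp : A 2 * (z 3 * A 2) = (5 + s) • (A 2 * (A 2 * A 2)) + (-(4 * s)) • (A 2 * (A 3 * A 2))
        + (-5 + s) • (A 2 * (A 1 * A 2)) := by
      simp only [hz_def]
      simp +decide [mul_add, add_mul, smul_mul_assoc, mul_smul_comm, mul_assoc, o42, o02, o13, o24, o03]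
    have h0 : τ (A 2 * (z 3 * A 2)) = 0 := by rw [hz0 3, zero_mul, mul_zero, _root_.map_zero]
    rw [hexp, _root_.map_add, _root_.map_add, _root_.map_smul, _root_.map_smul, _root_.map_smul,
      smul_eq_mul, smul_eq_mul, smul_eq_mul] at h0
    linarith [h0]
  have E2b : (5 + s) * τ (A 2 * (A 2 * A 2)) + (-(4 * s)) * τ (A 2 * (A 1 * A 2))
      + (-5 + s) * τ (A 2 * (A 3 * A 2)) = 0 := by
    have hexp : A 2 * (z 1 * A 2) = (5 + s) • (A 2 * (A 2 * A 2)) + (-(4 * s)) • (A 2 * (A 1 * A 2))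
        + (-5 + s) • (A 2 * (A 3 * A 2)) := by
      simp only [hz_def]
      simp +decide [mul_add, add_mul, smul_mul_assoc, mul_smul_comm, mul_assoc, o42, o02, o13, o24, o03]
    have h0 : τ (A 2 * (z 1 * A 2)) = 0 := by rw [hz0 1, zero_mul, mul_zero, _root_.map_zero]
    rw [hexp, _root_.map_add, _root_.map_add, _root_.map_smul, _root_.map_smul, _root_.map_smul,
      smul_eq_mul, smul_eq_mul, smul_eq_mul] at h0
    linarith [h0]
  have E3a : (5 + s) * τ (A 3 * (A 3 * A 3)) + (-(4 * s)) * τ (A 3 * (A 4 * A 3))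
      + (-5 + s) * τ (A 3 * (A 2 * A 3)) = 0 := by
    have hexp : A 3 * (z 4 * A 3) = (5 + s) • (A 3 * (A 3 * A 3)) + (-(4 * s)) • (A 3 * (A 4 * A 3))
        + (-5 + s) • (A 3 * (A 2 * A 3)) := by
      simp only [hz_def]
      simp +decide [mul_add, add_mul, smul_mul_assoc, mul_smul_comm, mul_assoc, o42, o02, o13, o24, o03]
    have h0 : τ (A 3 * (z 4 * A 3)) = 0 := by rw [hz0 4, zero_mul, mul_zero, _root_.map_zero]
    rw [hexp, _root_.map_add, _root_.map_add, _root_.map_smul, _root_.map_smul, _root_.map_smul,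
      smul_eq_mul, smul_eq_mul, smul_eq_mul] at h0
    linarith [h0]
  have E3b : (5 + s) * τ (A 3 * (A 3 * A 3)) + (-(4 * s)) * τ (A 3 * (A 2 * A 3))
      + (-5 + s) * τ (A 3 * (A 4 * A 3)) = 0 := by
    have hexp : A 3 * (z 2 * A 3) = (5 + s) • (A 3 * (A 3 * A 3)) + (-(4 * s)) • (A 3 * (A 2 * A 3))
        + (-5 + s) • (A 3 * (A 4 * A 3)) := by
      simp only [hz_def]
      simp +decide [mul_add, add_mul, smul_mul_assoc, mul_smul_comm, mul_assoc, o42, o02, o13, o24, o03]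
    have h0 : τ (A 3 * (z 2 * A 3)) = 0 := by rw [hz0 2, zero_mul, mul_zero, _root_.map_zero]
    rw [hexp, _root_.map_add, _root_.map_add, _root_.map_smul, _root_.map_smul, _root_.map_smul,
      smul_eq_mul, smul_eq_mul, smul_eq_mul] at h0
    linarith [h0]
  have EX : (-5 + s) * τ (A 2 * (A 2 * A 3)) + (-5 + s) * τ (A 2 * (A 3 * A 3)) = 0 := by
    have hexp : A 2 * (z 0 * A 3) = (-5 + s) • (A 2 * (A 2 * A 3)) + (-5 + s) • (A 2 * (A 3 * A 3)) := by
      simp only [hz_def]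
      simp +decide [mul_add, add_mul, smul_mul_assoc, mul_smul_comm, mul_assoc, o42, o02, o13, o24, o03, h243]
    have h0 : τ (A 2 * (z 0 * A 3)) = 0 := by rw [hz0 0, zero_mul, mul_zero, _root_.map_zero]
    rw [hexp, _root_.map_add, _root_.map_smul, _root_.map_smul, smul_eq_mul, smul_eq_mul] at h0
    linarith [h0]
  have cyc1 : τ (A 2 * (A 2 * A 3)) = τ (A 2 * (A 3 * A 2)) := by
    rw [htracial (A 2) (A 2 * A 3), mul_assoc]
  have cyc2 : τ (A 2 * (A 3 * A 3)) = τ (A 3 * (A 2 * A 3)) := by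
    rw [htracial (A 2) (A 3 * A 3), mul_assoc, htracial (A 3) (A 3 * A 2), mul_assoc]
  have hne1 : (5:ℝ) - 5 * s ≠ 0 := by nlinarith
  have hpq2 : τ (A 2 * (A 3 * A 2)) = τ (A 2 * (A 1 * A 2)) := by
    have h : (5 - 5*s) * (τ (A 2 * (A 3 * A 2)) - τ (A 2 * (A 1 * A 2))) = 0 := by
      linear_combination E2a - E2b
    rcases mul_eq_zero.mp h with h' | h'
    · exact absurd h' hne1
    · linarith
  have hpq3 : τ (A 3 * (A 4 * A 3)) = τ (A 3 * (A 2 * A 3)) := by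
    have h : (5 - 5*s) * (τ (A 3 * (A 4 * A 3)) - τ (A 3 * (A 2 * A 3))) = 0 := by
      linear_combination E3a - E3b
    rcases mul_eq_zero.mp h with h' | h'
    · exact absurd h' hne1
    · linarith
  have hp2 : (5 + 3*s) * τ (A 2 * (A 3 * A 2)) = (5 + s) * τ (A 2 * (A 2 * A 2)) := by
    linear_combination (-1) * E2a + (5 - s) * hpq2
  have hq3 : (5 + 3*s) * τ (A 3 * (A 2 * A 3)) = (5 + s) * τ (A 3 * (A 3 * A 3)) := by
    linear_combination (-1) * E3b + (s - 5) * hpq3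
  have hne2 : (-5:ℝ) + s ≠ 0 := by nlinarith
  have hXsum : τ (A 2 * (A 2 * A 3)) + τ (A 2 * (A 3 * A 3)) = 0 := by
    have h : (-5 + s) * (τ (A 2 * (A 2 * A 3)) + τ (A 2 * (A 3 * A 3))) = 0 := by
      linear_combination EX
    rcases mul_eq_zero.mp h with h' | h'
    · exact absurd h' hne2
    · linarith
  have hXX : τ (A 2 * (A 3 * A 2)) + τ (A 3 * (A 2 * A 3)) = 0 := by
    rw [← cyc1, ← cyc2]; exact hXsum
  have hsum : τ (A 2 * (A 2 * A 2)) + τ (A 3 * (A 3 * A 3)) = 0 := by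
    have h : (5 + s) * (τ (A 2 * (A 2 * A 2)) + τ (A 3 * (A 3 * A 3))) = 0 := by
      linear_combination (-1) * hp2 + (-1) * hq3 + (5 + 3*s) * hXX
    have hne3 : (5:ℝ) + s ≠ 0 := by nlinarith
    rcases mul_eq_zero.mp h with h' | h'
    · exact absurd h' hne3
    · linarith
  obtain ⟨x2, hx2⟩ := hsq 2
  obtain ⟨x3, hx3⟩ := hsq 3
  have hform2 : star (x2 * A 2) * (x2 * A 2) = A 2 * (A 2 * A 2) := by
    rw [StarMul.star_mul, hA, mul_assoc, ← mul_assoc (star x2) x2 (A 2), ← hx2]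
  have hform3 : star (x3 * A 3) * (x3 * A 3) = A 3 * (A 3 * A 3) := by
    rw [StarMul.star_mul, hA, mul_assoc, ← mul_assoc (star x3) x3 (A 3), ← hx3]
  have ht2 : 0 ≤ τ (A 2 * (A 2 * A 2)) := by
    have h := hpos (x2 * A 2); rwa [hform2] at h
  have ht3 : 0 ≤ τ (A 3 * (A 3 * A 3)) := by
    have h := hpos (x3 * A 3); rwa [hform3] at h
  have ht20 : τ (A 2 * (A 2 * A 2)) = 0 := by linarith
  have hy0 : x2 * A 2 = 0 := hfaithful _ (by rw [hform2]; exact ht20)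
  have hA22 : A 2 * A 2 = 0 := by
    have h : A 2 * A 2 = star x2 * (x2 * A 2) := by rw [← mul_assoc, ← hx2]
    rw [h, hy0, mul_zero]
  have hfinal := hgram 2 2
  rw [hA22, _root_.map_zero] at hfinal
  simp only [Mcirc, Matrix.of_apply, if_pos rfl] at hfinal
  norm_num at hfinal
end

section
/- For every ε ≥ 0, the set K_{nc,ε} of matrices M ∈ Sⁿ for which p_M + ε belongs to the tracial quadratic module of the ball is convex, and ⋂_{ε>0} K_{nc,ε} ⊆ CS₊ⁿ*. -/
open Matrix

/-- Free real algebra in `n` non-commuting variables. -/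
abbrev NC (n : ℕ) := FreeAlgebra ℝ (Fin n)

noncomputable def ncX {n : ℕ} (i : Fin n) : NC n := FreeAlgebra.ι ℝ i

/-- The involution `*` reversing the order of variables in each monomial. -/
noncomputable def ncStarHom (n : ℕ) : NC n →ₐ[ℝ] (NC n)ᵐᵒᵖ :=
  FreeAlgebra.lift ℝ (fun i => MulOpposite.op (FreeAlgebra.ι ℝ i))

noncomputable def ncStar {n : ℕ} (f : NC n) : NC n := MulOpposite.unop (ncStarHom n f)

/-- `h` is a sum of commutators `[f,g] = fg − gf`. -/
def IsSumOfCommutators {n : ℕ} (h : NC n) : Prop :=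
  ∃ (m : ℕ) (f g : Fin m → NC n), h = ∑ k, (f k * g k - g k * f k)

/-- Membership in the tracial quadratic module of the ball, generated by `1 − Σᵢ Xᵢ²`:
sums of commutators, Hermitian squares `f f*`, and terms `g (1 − Σᵢ Xᵢ²) g*`. -/
def InTrMBall {n : ℕ} (p : NC n) : Prop :=
  ∃ (h : NC n) (m₀ m₁ : ℕ) (f : Fin m₀ → NC n) (g : Fin m₁ → NC n),
    IsSumOfCommutators h ∧
    p = h + (∑ j, f j * ncStar (f j)) +
        ∑ j, g j * (1 - ∑ i, (ncX i) ^ 2) * ncStar (g j)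

/-- The polynomial `p_M = Σ_{i,j} M_{ij} X_i² X_j²`. -/
noncomputable def pM {n : ℕ} (M : Matrix (Fin n) (Fin n) ℝ) : NC n :=
  ∑ i, ∑ j, M i j • ((ncX i) ^ 2 * (ncX j) ^ 2)

/-- The convex set `K_{nc,ε}` of matrices `M` with `p_M + ε` in the tracial module of the ball. -/
def Knc (n : ℕ) (ε : ℝ) : Set (Matrix (Fin n) (Fin n) ℝ) :=
  {M | InTrMBall (pM M + algebraMap ℝ (NC n) ε)}

/-- The dual cone `CS₊ⁿ*`. -/
def InDualCSplus {n : ℕ} (M : Matrix (Fin n) (Fin n) ℝ) : Prop :=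
  ∀ (d : ℕ) (X : Fin n → Matrix (Fin d) (Fin d) ℝ), (∀ i, (X i).PosSemidef) →
    0 ≤ ∑ i, ∑ j, M i j * ((X i) * (X j)).trace

/-! The tracial quadratic module is a convex cone and `M ↦ p_M` is linear, so each `K_{nc,ε}` is
the preimage of a convex set under an affine map.

Every element of the module has nonnegative trace at any tuple of symmetric matrices in the ball:
commutators have trace zero, while `f f*` and `g (1 - Σ Xᵢ²) g*` evaluate to positive semidefinite
matrices. Given positive semidefinite `Xᵢ`, choose `s > 0` with `s Σ Xᵢ ⪯ 1` and evaluate at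
`Yᵢ = √(s Xᵢ)`, a point of the ball. There the trace of `p_M + ε` is
`s² Σ Mᵢⱼ tr (Xᵢ Xⱼ) + ε d`, and letting `ε → 0` gives `M ∈ CS₊ⁿ*`. -/

open scoped MatrixOrder

section NCStar

variable {n : ℕ}

lemma ncStar_mul (f g : NC n) : ncStar (f * g) = ncStar g * ncStar f := by
  simp [ncStar]

lemma ncStar_add (f g : NC n) : ncStar (f + g) = ncStar f + ncStar g := by
  simp [ncStar]

lemma ncStar_smul (c : ℝ) (f : NC n) : ncStar (c • f) = c • ncStar f := by
  simp [ncStar]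

theorem lift_ncStar {A : Type*} [Ring A] [Algebra ℝ A] [StarRing A] [StarModule ℝ A]
    {Y : Fin n → A} (hY : ∀ i, IsSelfAdjoint (Y i)) (f : NC n) :
    FreeAlgebra.lift ℝ Y (ncStar f) = star (FreeAlgebra.lift ℝ Y f) := by
  induction f using FreeAlgebra.induction with
  | grade0 r => simp [ncStar, ← algebraMap_star_comm]
  | grade1 i => simpa [ncStar, ncStarHom] using (hY i).symm
  | mul f g hf hg => rw [ncStar_mul, map_mul, map_mul, hf, hg, star_mul]
  | add f g hf hg => rw [ncStar_add, map_add, map_add, hf, hg, star_add]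

end NCStar

namespace IsSumOfCommutators

variable {n : ℕ}

lemma add {h₁ h₂ : NC n} (H₁ : IsSumOfCommutators h₁) (H₂ : IsSumOfCommutators h₂) :
    IsSumOfCommutators (h₁ + h₂) := by
  obtain ⟨m, f, g, rfl⟩ := H₁
  obtain ⟨m', f', g', rfl⟩ := H₂
  exact ⟨m + m', Fin.append f f', Fin.append g g', by
    simp only [Fin.sum_univ_add, Fin.append_left, Fin.append_right]⟩

lemma smul {h : NC n} (c : ℝ) (H : IsSumOfCommutators h) : IsSumOfCommutators (c • h) := by
  obtain ⟨m, f, g, rfl⟩ := H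
  exact ⟨m, fun k => c • f k, g, by simp [Finset.smul_sum, smul_sub]⟩

end IsSumOfCommutators

namespace InTrMBall

variable {n : ℕ}

lemma add {p q : NC n} (hp : InTrMBall p) (hq : InTrMBall q) : InTrMBall (p + q) := by
  obtain ⟨h, m₀, m₁, f, g, hh, rfl⟩ := hp
  obtain ⟨h', m₀', m₁', f', g', hh', rfl⟩ := hq
  refine ⟨h + h', m₀ + m₀', m₁ + m₁', Fin.append f f', Fin.append g g', hh.add hh', ?_⟩
  simp only [Fin.sum_univ_add, Fin.append_left, Fin.append_right]
  abel

lemma smul {p : NC n} {c : ℝ} (hc : 0 ≤ c) (hp : InTrMBall p) : InTrMBall (c • p) := by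
  obtain ⟨h, m₀, m₁, f, g, hh, rfl⟩ := hp
  refine ⟨c • h, m₀, m₁, fun j => √c • f j, fun j => √c • g j, hh.smul c, ?_⟩
  simp only [ncStar_smul, smul_mul_assoc, mul_smul_comm, smul_smul, Real.mul_self_sqrt hc,
    smul_add, Finset.smul_sum]

end InTrMBall

def trMBall (n : ℕ) : ConvexCone ℝ (NC n) where
  carrier := {p | InTrMBall p}
  smul_mem' _ hc _ hp := hp.smul hc.le
  add_mem' _ hp _ hq := hp.add hq

noncomputable def pMLinear (n : ℕ) : Matrix (Fin n) (Fin n) ℝ →ₗ[ℝ] NC n where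
  toFun := pM
  map_add' M N := by simp [pM, add_smul, Finset.sum_add_distrib]
  map_smul' c M := by simp [pM, Finset.smul_sum, smul_smul]

theorem convex_Knc (n : ℕ) (ε : ℝ) : Convex ℝ (Knc n ε) :=
  ((trMBall n).convex.translate_preimage_left (algebraMap ℝ (NC n) ε)).linear_preimage
    (pMLinear n)

section Trace

open scoped ComplexOrder

variable {n : ℕ} {𝕜 ι : Type*} [RCLike 𝕜] [Fintype ι] [DecidableEq ι]

theorem Matrix.IsHermitian.exists_pos_posSemidef_one_sub_smul {A : Matrix ι ι 𝕜}
    (hA : A.IsHermitian) : ∃ s : ℝ, 0 < s ∧ (1 - s • A).PosSemidef := by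
  obtain ⟨r, hr⟩ := A.finite_real_spectrum.bddAbove
  have hpos : 0 < max r 1 := lt_max_of_lt_right one_pos
  have hle : A ≤ algebraMap ℝ (Matrix ι ι 𝕜) (max r 1) :=
    le_algebraMap_of_spectrum_le fun x hx => (hr hx).trans (le_max_left r 1)
  refine ⟨(max r 1)⁻¹, inv_pos.2 hpos, ?_⟩
  convert (Matrix.le_iff.1 hle).smul (inv_pos.2 hpos).le using 1
  rw [Algebra.algebraMap_eq_smul_one, smul_sub, smul_smul, inv_mul_cancel₀ hpos.ne', one_smul]

lemma trace_lift_eq_zero_of_isSumOfCommutators (Y : Fin n → Matrix ι ι 𝕜) {h : NC n}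
    (hh : IsSumOfCommutators h) : (FreeAlgebra.lift ℝ Y h).trace = 0 := by
  obtain ⟨m, f, g, rfl⟩ := hh
  simp [Matrix.trace_sum, Matrix.trace_sub, Matrix.trace_mul_comm (FreeAlgebra.lift ℝ Y (f _))]

theorem trace_lift_nonneg_of_inTrMBall {Y : Fin n → Matrix ι ι 𝕜} (hY : ∀ i, IsSelfAdjoint (Y i))
    (hball : (1 - ∑ i, Y i ^ 2).PosSemidef) {p : NC n} (hp : InTrMBall p) :
    0 ≤ (FreeAlgebra.lift ℝ Y p).trace := by
  obtain ⟨h, m₀, m₁, f, g, hh, rfl⟩ := hp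
  have hstar (f : NC n) : FreeAlgebra.lift ℝ Y (ncStar f) = (FreeAlgebra.lift ℝ Y f)ᴴ :=
    lift_ncStar hY f
  have hball' : FreeAlgebra.lift ℝ Y (1 - ∑ i, ncX i ^ 2) = 1 - ∑ i, Y i ^ 2 := by
    simp [ncX]
  simp only [map_add, map_sum, map_mul, Matrix.trace_add, Matrix.trace_sum,
    trace_lift_eq_zero_of_isSumOfCommutators Y hh, zero_add, hstar, hball']
  exact add_nonneg
    (Finset.sum_nonneg fun j _ => (posSemidef_self_mul_conjTranspose _).trace_nonneg)
    (Finset.sum_nonneg fun j _ => (hball.mul_mul_conjTranspose_same _).trace_nonneg)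

end Trace

lemma lift_pM {n : ℕ} {A : Type*} [Ring A] [Algebra ℝ A] (Y : Fin n → A)
    (M : Matrix (Fin n) (Fin n) ℝ) :
    FreeAlgebra.lift ℝ Y (pM M) = ∑ i, ∑ j, M i j • (Y i ^ 2 * Y j ^ 2) := by
  simp [pM, ncX]

lemma nonneg_of_forall_pos_nonneg_add_mul {a b : ℝ} (h : ∀ ε : ℝ, 0 < ε → 0 ≤ a + ε * b) :
    0 ≤ a := by
  have hlim : Filter.Tendsto (fun ε => a + ε * b) (nhdsWithin 0 (Set.Ioi 0)) (nhds a) := by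
    refine Filter.Tendsto.mono_left ?_ nhdsWithin_le_nhds
    simpa using ((continuous_mul_const b).const_add a).tendsto 0
  exact ge_of_tendsto hlim (eventually_nhdsWithin_of_forall h)

theorem inDualCSplus_of_forall_pos_mem_Knc {n : ℕ} {M : Matrix (Fin n) (Fin n) ℝ}
    (hM : ∀ ε : ℝ, 0 < ε → M ∈ Knc n ε) : InDualCSplus M := by
  intro d X hX
  obtain ⟨s, hs, hball⟩ := (Matrix.posSemidef_sum Finset.univ fun i _ => hX i).isHermitian
    |>.exists_pos_posSemidef_one_sub_smul
  set Y : Fin n → Matrix (Fin d) (Fin d) ℝ := fun i => CFC.sqrt (s • X i)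
  have hY i : IsSelfAdjoint (Y i) := IsSelfAdjoint.of_nonneg (CFC.sqrt_nonneg _)
  have hYsq i : Y i ^ 2 = s • X i := CFC.sq_sqrt _ ((hX i).smul hs.le).nonneg
  have hYball : (1 - ∑ i, Y i ^ 2).PosSemidef := by simpa [hYsq, Finset.smul_sum] using hball
  have htrace ε : (FreeAlgebra.lift ℝ Y (pM M + algebraMap ℝ (NC n) ε)).trace =
      s ^ 2 * ∑ i, ∑ j, M i j * (X i * X j).trace + ε * d := by
    rw [map_add, AlgHom.commutes, Algebra.algebraMap_eq_smul_one]
    simp only [lift_pM, hYsq, Matrix.trace_add, Matrix.trace_sum,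
      Matrix.trace_smul, Matrix.smul_mul, Matrix.mul_smul, Matrix.trace_one, Finset.mul_sum,
      smul_eq_mul, Fintype.card_fin]
    congr 1
    exact Finset.sum_congr rfl fun i _ => Finset.sum_congr rfl fun j _ => by ring
  have := nonneg_of_forall_pos_nonneg_add_mul fun ε hε =>
    htrace ε ▸ trace_lift_nonneg_of_inTrMBall hY hYball (hM ε hε)
  exact nonneg_of_mul_nonneg_right this (by positivity)

/-- For every `ε ≥ 0` the set `K_{nc,ε}` is convex, and `⋂_{ε>0} K_{nc,ε} ⊆ CS₊ⁿ*`. -/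
theorem Knc_convex_and_inter_subset_dual (n : ℕ) :
    (∀ ε : ℝ, 0 ≤ ε → Convex ℝ (Knc n ε)) ∧
    {M : Matrix (Fin n) (Fin n) ℝ | ∀ ε : ℝ, 0 < ε → M ∈ Knc n ε} ⊆
      {M | InDualCSplus M} :=
  ⟨fun ε _ => convex_Knc n ε, fun _ hM => inDualCSplus_of_forall_pos_mem_Knc hM⟩
end

section
/- Let G be a graph with ϑ'(G) ≥ t for an integer t ≥ 1, and let G_t be the graph on V(G)×[t] where (u,i) ∼ (v,j) iff (i ≠ j and u ≃ v) or (i = j and u ≠ v). Then ϑ'(G_t) ≥ t. -/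
open Matrix

/-- The Schrijver theta number `ϑ'(G)`: the supremum of `⟨J,X⟩` over doubly nonnegative
matrices `X` with `Tr(X) = 1` and `X_{uv} = 0` on the edges of `G`. -/
noncomputable def thetaPrime {V : Type*} [Fintype V] (G : SimpleGraph V) : ℝ :=
  sSup {r : ℝ | ∃ X : Matrix V V ℝ, X.PosSemidef ∧ (∀ u v, 0 ≤ X u v) ∧
    X.trace = 1 ∧ (∀ u v, G.Adj u v → X u v = 0) ∧ r = ∑ u, ∑ v, X u v}

/-- The graph `G_t` on `V(G) × [t]`: `(u,i) ∼ (v,j)` iff (`i ≠ j` and `u ≃ v`) or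
(`i = j` and `u ≠ v`), where `u ≃ v` means adjacent or equal. -/
def Gt {V : Type*} (G : SimpleGraph V) (t : ℕ) : SimpleGraph (V × Fin t) :=
  SimpleGraph.fromRel (fun p q =>
    (p.2 ≠ q.2 ∧ (p.1 = q.1 ∨ G.Adj p.1 q.1)) ∨ (p.2 = q.2 ∧ p.1 ≠ q.1))

/-!
If `X` is doubly nonnegative and vanishes on the edges of `G`, so is its Schur product with
`|y| |y|ᵀ`; comparing the entry sum of that product with its trace gives
`yᵀ X y ≤ |y|ᵀ X |y| ≤ ϑ'(G) ∑ X_uu y_u²`, i.e. `ϑ'(G) D − X ⪰ 0` for `D = Diag(X)`.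
This plays the role of the Perron–Frobenius argument.

Put `T = ϑ'(G) ≥ t` and `M = (T−1) D ⊗ I_t − (D − X) ⊗ (J_t − I_t)`. Then
`t M = ((T−t) D + (t−1) X) ⊗ J_t + (T D − X) ⊗ (t I_t − J_t)` is a sum of Kronecker products
of positive semidefinite matrices, `M` is entrywise nonnegative, and it vanishes on the edges
of `G_t`. For `Tr X = 1`, `Tr M = t (T−1)` and `⟨J, M⟩ = t (T−1) + t (t−1) (⟨J, X⟩ − 1)`, so
`ϑ'(G_t) ≥ 1 + (t−1) (⟨J, X⟩ − 1) / (T−1)`, and the supremum over `X` gives `ϑ'(G_t) ≥ t`.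
For `t = 1` this degenerates, but then `ϑ'(G_1) ≥ 1` already holds because `V` is nonempty.
-/

open scoped Kronecker

namespace Matrix

variable {n : Type*} [Fintype n]

lemma star_dotProduct_mulVec_eq_sum_hadamard (A : Matrix n n ℝ) (y : n → ℝ) :
    star y ⬝ᵥ (A *ᵥ y) = ∑ u, ∑ v, (A ⊙ vecMulVec y y) u v := by
  simp only [dotProduct, mulVec, star_trivial, Finset.mul_sum, hadamard_apply, vecMulVec_apply]
  exact Finset.sum_congr rfl fun u _ => Finset.sum_congr rfl fun v _ => by ring

lemma PosSemidef.two_mul_apply_le {A : Matrix n n ℝ} (hA : A.PosSemidef) (u v : n) :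
    2 * A u v ≤ A u u + A v v := by
  classical
  have hsymm : A v u = A u v := by simpa using hA.isHermitian.apply u v
  have := hA.dotProduct_mulVec_nonneg (Pi.single u 1 - Pi.single v 1)
  simp [mulVec_sub, sub_dotProduct, dotProduct_sub] at this
  linarith

lemma PosSemidef.sum_le_card_mul_trace {A : Matrix n n ℝ} (hA : A.PosSemidef) :
    ∑ u, ∑ v, A u v ≤ Fintype.card n * A.trace := by
  have h2 : ∑ u, ∑ v, 2 * A u v ≤ ∑ u, ∑ v, (A u u + A v v) :=
    Finset.sum_le_sum fun u _ => Finset.sum_le_sum fun v _ => hA.two_mul_apply_le u v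
  simp only [← Finset.mul_sum, Finset.sum_add_distrib, Finset.sum_const, Finset.card_univ,
    nsmul_eq_mul] at h2
  simp only [trace, diag]
  linarith

lemma posSemidef_of_ones : (of fun _ _ => (1 : ℝ) : Matrix n n ℝ).PosSemidef := by
  convert posSemidef_vecMulVec_self_star (1 : n → ℝ)
  ext u v
  simp [vecMulVec_apply]

lemma posSemidef_card_smul_one_sub_of_ones [DecidableEq n] :
    ((Fintype.card n : ℝ) • (1 : Matrix n n ℝ) - of fun _ _ => 1).PosSemidef := by
  have hlap : (Fintype.card n : ℝ) • (1 : Matrix n n ℝ) - of (fun _ _ => 1) =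
      (⊤ : SimpleGraph n).lapMatrix ℝ := by
    ext u v
    rcases eq_or_ne u v with rfl | huv
    · simp [SimpleGraph.lapMatrix, SimpleGraph.degMatrix,
        Nat.cast_sub (Fintype.card_pos_iff.mpr ⟨u⟩)]
    · simp [SimpleGraph.lapMatrix, SimpleGraph.degMatrix, huv]
  exact hlap ▸ SimpleGraph.posSemidef_lapMatrix ℝ ⊤

lemma sum_kronecker {m : Type*} [Fintype m] (A : Matrix n n ℝ) (B : Matrix m m ℝ) :
    ∑ p, ∑ q, (A ⊗ₖ B) p q = (∑ u, ∑ v, A u v) * ∑ i, ∑ j, B i j := by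
  simp only [Fintype.sum_prod_type, kroneckerMap_apply, Finset.sum_mul_sum]

end Matrix

section ThetaPrime

variable {V : Type*} [Fintype V] (G : SimpleGraph V)

lemma le_thetaPrime {X : Matrix V V ℝ} (hX : X.PosSemidef) (hnn : ∀ u v, 0 ≤ X u v)
    (htr : X.trace = 1) (hadj : ∀ u v, G.Adj u v → X u v = 0) :
    ∑ u, ∑ v, X u v ≤ thetaPrime G := by
  refine le_csSup ⟨Fintype.card V, ?_⟩ ⟨X, hX, hnn, htr, hadj, rfl⟩
  rintro r ⟨Y, hY, -, hYtr, -, rfl⟩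
  simpa [hYtr] using hY.sum_le_card_mul_trace

lemma thetaPrime_le {b : ℝ}
    (hne : ∃ X : Matrix V V ℝ, X.PosSemidef ∧ (∀ u v, 0 ≤ X u v) ∧ X.trace = 1 ∧
      ∀ u v, G.Adj u v → X u v = 0)
    (hb : ∀ X : Matrix V V ℝ, X.PosSemidef → (∀ u v, 0 ≤ X u v) → X.trace = 1 →
      (∀ u v, G.Adj u v → X u v = 0) → ∑ u, ∑ v, X u v ≤ b) :
    thetaPrime G ≤ b := by
  obtain ⟨X, hX, hnn, htr, hadj⟩ := hne
  refine csSup_le ⟨_, X, hX, hnn, htr, hadj, rfl⟩ ?_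
  rintro r ⟨Y, hY, hnn, htr, hadj, rfl⟩
  exact hb Y hY hnn htr hadj

lemma exists_of_thetaPrime_pos (h : 0 < thetaPrime G) :
    ∃ X : Matrix V V ℝ, X.PosSemidef ∧ (∀ u v, 0 ≤ X u v) ∧ X.trace = 1 ∧
      ∀ u v, G.Adj u v → X u v = 0 := by
  by_contra hne
  refine h.not_ge (Real.sSup_nonpos ?_)
  rintro r ⟨X, hX, hnn, htr, hadj, -⟩
  exact absurd ⟨X, hX, hnn, htr, hadj⟩ hne

lemma one_le_thetaPrime [Nonempty V] : 1 ≤ thetaPrime G := by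
  classical
  obtain ⟨p⟩ := ‹Nonempty V›
  have hd : (0 : V → ℝ) ≤ Pi.single p 1 := Pi.single_nonneg.mpr zero_le_one
  simpa [Finset.sum_ite_eq, diagonal_apply] using
    le_thetaPrime G (PosSemidef.diagonal hd)
      (fun u v => by rw [diagonal_apply]; split_ifs; exacts [hd u, le_rfl])
      (by simp) (fun u v h => diagonal_apply_ne _ h.ne)

lemma sum_le_thetaPrime_mul_trace {Y : Matrix V V ℝ} (hY : Y.PosSemidef)
    (hnn : ∀ u v, 0 ≤ Y u v) (hadj : ∀ u v, G.Adj u v → Y u v = 0) :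
    ∑ u, ∑ v, Y u v ≤ thetaPrime G * Y.trace := by
  obtain h0 | hpos := hY.trace_nonneg.eq_or_lt
  · simp [hY.trace_eq_zero_iff.mp h0.symm]
  have hc : 0 ≤ Y.trace⁻¹ := inv_nonneg.mpr hpos.le
  have := le_thetaPrime G (hY.smul hc) (fun u v => mul_nonneg hc (hnn u v))
    (by rw [trace_smul, smul_eq_mul, inv_mul_cancel₀ hpos.ne'])
    (fun u v h => by simp [hadj u v h])
  simp only [Matrix.smul_apply, smul_eq_mul, ← Finset.mul_sum] at this
  rwa [inv_mul_le_iff₀ hpos, mul_comm] at this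

lemma posSemidef_thetaPrime_smul_diagonal_sub [DecidableEq V] {X : Matrix V V ℝ}
    (hX : X.PosSemidef) (hnn : ∀ u v, 0 ≤ X u v) (hadj : ∀ u v, G.Adj u v → X u v = 0) :
    (thetaPrime G • diagonal X.diag - X).PosSemidef := by
  refine .of_dotProduct_mulVec_nonneg
    (((isHermitian_diagonal _).smul (.all _)).sub hX.isHermitian) fun y => ?_
  set b : V → ℝ := fun u => |y u|
  have hXb : (X ⊙ vecMulVec b b).PosSemidef := by
    simpa using hX.hadamard (posSemidef_vecMulVec_self_star b)
  have key := calc star y ⬝ᵥ (X *ᵥ y) = ∑ u, ∑ v, (X ⊙ vecMulVec y y) u v :=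
        star_dotProduct_mulVec_eq_sum_hadamard X y
    _ ≤ ∑ u, ∑ v, (X ⊙ vecMulVec b b) u v := by
        refine Finset.sum_le_sum fun u _ => Finset.sum_le_sum fun v _ => ?_
        simp only [hadamard_apply, vecMulVec_apply, b, ← abs_mul]
        exact mul_le_mul_of_nonneg_left (le_abs_self _) (hnn u v)
    _ ≤ thetaPrime G * (X ⊙ vecMulVec b b).trace := by
        refine sum_le_thetaPrime_mul_trace G hXb (fun u v => ?_)
          (fun u v h => by simp [hadj u v h])
        simp only [hadamard_apply, vecMulVec_apply]
        exact mul_nonneg (hnn u v) (mul_nonneg (abs_nonneg _) (abs_nonneg _))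
    _ = star y ⬝ᵥ ((thetaPrime G • diagonal X.diag) *ᵥ y) := by
        simp only [trace, diag_apply, hadamard_apply, vecMulVec_apply, b, abs_mul_abs_self,
          dotProduct, star_trivial, smul_mulVec, mulVec_diagonal, Pi.smul_apply, smul_eq_mul,
          Finset.mul_sum]
        exact Finset.sum_congr rfl fun u _ => by ring
  rw [sub_mulVec, dotProduct_sub, sub_nonneg]
  exact key

end ThetaPrime

section Blowup

variable {V : Type*}

lemma gt_adj_iff (G : SimpleGraph V) {t : ℕ} {u v : V} {i j : Fin t} :
    (Gt G t).Adj (u, i) (v, j) ↔ (i ≠ j ∧ (u = v ∨ G.Adj u v)) ∨ (i = j ∧ u ≠ v) := by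
  simp only [Gt, SimpleGraph.fromRel_adj, ne_eq, Prod.mk.injEq, G.adj_comm v u,
    eq_comm (a := v), eq_comm (a := j)]
  tauto

variable [DecidableEq V]

def blowupMatrix (X : Matrix V V ℝ) (T : ℝ) (t : ℕ) : Matrix (V × Fin t) (V × Fin t) ℝ :=
  (T - 1) • diagonal X.diag ⊗ₖ 1 - (diagonal X.diag - X) ⊗ₖ (of (fun _ _ => 1) - 1)

variable {X : Matrix V V ℝ} {T : ℝ} {t : ℕ}

lemma blowupMatrix_apply (u v : V) (i j : Fin t) :
    blowupMatrix X T t (u, i) (v, j) =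
      if i = j then (if u = v then (T - 1) * X u u else 0)
      else (if u = v then 0 else X u v) := by
  by_cases hij : i = j <;> by_cases huv : u = v <;>
    simp [blowupMatrix, kroneckerMap_apply, one_apply, hij, huv]

lemma blowupMatrix_nonneg (hT : 1 ≤ T) (hnn : ∀ u v, 0 ≤ X u v) :
    ∀ p q, 0 ≤ blowupMatrix X T t p q := by
  rintro ⟨u, i⟩ ⟨v, j⟩
  rw [blowupMatrix_apply]
  split_ifs
  exacts [mul_nonneg (sub_nonneg.2 hT) (hnn _ _), le_rfl, le_rfl, hnn _ _]

lemma blowupMatrix_eq_zero_of_adj (G : SimpleGraph V) (hadj : ∀ u v, G.Adj u v → X u v = 0) :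
    ∀ p q, (Gt G t).Adj p q → blowupMatrix X T t p q = 0 := by
  rintro ⟨u, i⟩ ⟨v, j⟩ hpq
  rw [gt_adj_iff] at hpq
  rw [blowupMatrix_apply]
  rcases hpq with ⟨hij, rfl | huv⟩ | ⟨rfl, huv⟩
  · simp [hij]
  · simp [hij, G.ne_of_adj huv, hadj u v huv]
  · simp [huv]

variable [Fintype V]

lemma trace_blowupMatrix : (blowupMatrix X T t).trace = t * (T - 1) * X.trace := by
  simp only [blowupMatrix, trace_sub, trace_smul, trace_kronecker]
  simp [trace]
  ring

lemma sum_blowupMatrix : ∑ p, ∑ q, blowupMatrix X T t p q =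
    t * ((T - 1) * X.trace + (t - 1) * (∑ u, ∑ v, X u v - X.trace)) := by
  simp only [blowupMatrix, Matrix.sub_apply, Matrix.smul_apply, smul_eq_mul,
    Finset.sum_sub_distrib, ← Finset.mul_sum, sum_kronecker]
  simp [diagonal_apply, one_apply, trace]
  ring

lemma posSemidef_blowupMatrix (hX : X.PosSemidef) (ht : 1 ≤ t) (htT : (t : ℝ) ≤ T)
    (hTX : (T • diagonal X.diag - X).PosSemidef) : (blowupMatrix X T t).PosSemidef := by
  have htR : (1 : ℝ) ≤ t := by exact_mod_cast ht
  have hD : (diagonal X.diag).PosSemidef := .diagonal fun _ => hX.diag_nonneg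
  have hdecomp : (t : ℝ) • blowupMatrix X T t =
      ((T - t) • diagonal X.diag + ((t : ℝ) - 1) • X) ⊗ₖ of (fun _ _ => 1) +
        (T • diagonal X.diag - X) ⊗ₖ ((t : ℝ) • 1 - of fun _ _ => 1) := by
    ext ⟨u, i⟩ ⟨v, j⟩
    simp only [blowupMatrix, Matrix.add_apply, Matrix.sub_apply, Matrix.smul_apply,
      kroneckerMap_apply, of_apply, smul_eq_mul]
    ring
  have hscaled : ((t : ℝ) • blowupMatrix X T t).PosSemidef := by
    rw [hdecomp]
    refine (((hD.smul (sub_nonneg.2 htT)).add (hX.smul (sub_nonneg.2 htR))).kronecker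
      posSemidef_of_ones).add (hTX.kronecker ?_)
    simpa using posSemidef_card_smul_one_sub_of_ones (n := Fin t)
  simpa [smul_smul, inv_mul_cancel₀ (by positivity : (t : ℝ) ≠ 0)] using
    hscaled.smul (a := (t : ℝ)⁻¹) (by positivity)

lemma le_thetaPrime_gt_mul (G : SimpleGraph V) (hX : X.PosSemidef) (hnn : ∀ u v, 0 ≤ X u v)
    (hadj : ∀ u v, G.Adj u v → X u v = 0) (ht : 1 ≤ t) (htT : (t : ℝ) ≤ T)
    (hTX : (T • diagonal X.diag - X).PosSemidef) :
    (T - 1) * X.trace + (t - 1) * (∑ u, ∑ v, X u v - X.trace) ≤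
      thetaPrime (Gt G t) * ((T - 1) * X.trace) := by
  have hT : (1 : ℝ) ≤ T := le_trans (by exact_mod_cast ht) htT
  have h := sum_le_thetaPrime_mul_trace (Gt G t) (posSemidef_blowupMatrix hX ht htT hTX)
    (blowupMatrix_nonneg hT hnn) (blowupMatrix_eq_zero_of_adj G hadj)
  rw [sum_blowupMatrix, trace_blowupMatrix] at h
  exact le_of_mul_le_mul_left (by linarith) (by exact_mod_cast ht : (0 : ℝ) < t)

end Blowup

theorem thetaPrime_Gt_general {V : Type*} [Fintype V] (G : SimpleGraph V)
    (t : ℕ) (ht : 1 ≤ t) (h : (t : ℝ) ≤ thetaPrime G) :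
    (t : ℝ) ≤ thetaPrime (Gt G t) := by
  classical
  obtain ⟨X₀, hX₀⟩ := exists_of_thetaPrime_pos G ((Nat.cast_pos.mpr ht).trans_le h)
  obtain rfl | ht2 := ht.eq_or_lt
  · have : Nonempty V := by
      by_contra hV
      rw [not_nonempty_iff] at hV
      simp [Matrix.trace] at hX₀
    simpa using one_le_thetaPrime (Gt G 1)
  set T := thetaPrime G
  have ht2R : (1 : ℝ) < t := by exact_mod_cast ht2
  have hbound : T ≤ 1 + (thetaPrime (Gt G t) - 1) * (T - 1) / (t - 1) := by
    refine thetaPrime_le G ⟨X₀, hX₀⟩ fun X hX hnn htr hadj => ?_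
    have := le_thetaPrime_gt_mul G hX hnn hadj ht h
      (posSemidef_thetaPrime_smul_diagonal_sub G hX hnn hadj)
    rw [htr] at this
    rw [← sub_le_iff_le_add', le_div_iff₀ (by linarith)]
    linarith
  have hT : 0 < T - 1 := by linarith
  rw [← sub_le_iff_le_add', le_div_iff₀ (by linarith)] at hbound
  linarith [le_of_mul_le_mul_left (hbound.trans_eq (mul_comm _ _)) hT]

/-- If `ϑ'(G) ≥ t` for an integer `t ≥ 1`, then `ϑ'(G_t) ≥ t`. -/
theorem thetaPrime_Gt {V : Type*} [Fintype V] [DecidableEq V] (G : SimpleGraph V)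
    (t : ℕ) (ht : 1 ≤ t) (h : (t : ℝ) ≤ thetaPrime G) :
    (t : ℝ) ≤ thetaPrime (Gt G t) :=
  thetaPrime_Gt_general G t ht h
end

section
/- Let G be a graph and t ≥ 1 an integer. There exists a doubly nonnegative matrix X ∈ DNN^{|V(G)|} with ⌈X_{uu}⌉ = t for all u, X_{uv} = 0 for all edges {u,v} of G, and X − J ⪰ 0, if and only if there exists X ∈ DNN^{|V(G)|t+1} (indexed by {0} ∪ V(G)×[t]) satisfying X_{0,0} = 1, Σᵢ X_{0,ui} = 1 for all u, Σ_{i,j} X_{ui,uj} = 1 for all u, X_{ui,vi} = 0 for all i and edges {u,v}, and X_{ui,uj} = 0 for all i ≠ j and all u. -/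
open Matrix

def DoublyNonneg {V : Type*} [Fintype V] (A : Matrix V V ℝ) : Prop :=
  A.PosSemidef ∧ ∀ i j, 0 ≤ A i j

/-!
Forward direction: raise the diagonal of `X` to exactly `t` (this keeps `X ⪰ 0` and `X - J ⪰ 0`),
then lift `X` to the `Sym(t)`-invariant matrix with apex `1`, border `1/t`, diagonal blocks
`X / t²` and off-diagonal blocks `(tJ - X) / (t²(t - 1))`. Its Schur complement with respect to the
apex is `(X - J) ⊗ P` with `P = (tI - J) / (t²(t - 1))` (`P = 1` if `t = 1`), hence psd; the
off-diagonal blocks are nonnegative because `X_uv ≤ √(X_uu X_vv) = t`.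

Backward direction: put `X = t Σᵢ Yᵢᵢ`, with `Yᵢᵢ` the diagonal blocks. The Schur complement of the
principal submatrix on `{0} ∪ V × {i}` gives `Yᵢᵢ ⪰ bᵢ bᵢᵀ`, where `bᵢ` is the `i`-th part of the
border, and `Σᵢ bᵢ = 1`. Hence `X - J ⪰ t Σᵢ bᵢ bᵢᵀ - (Σᵢ bᵢ)(Σᵢ bᵢ)ᵀ ⪰ 0` by Cauchy–Schwarz.
-/

open scoped Kronecker

namespace Matrix

variable {n ι : Type*}

def bordered (b : n → ℝ) (C : Matrix n n ℝ) : Matrix (Option n) (Option n) ℝ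
  | none, none => 1
  | none, some v => b v
  | some u, none => b u
  | some u, some v => C u v

variable [Fintype n]

theorem posSemidef_bordered_iff (b : n → ℝ) (C : Matrix n n ℝ) :
    (bordered b C).PosSemidef ↔ (C - vecMulVec b b).PosSemidef := by
  have hblocks : bordered b C =
      (fromBlocks C (replicateCol Unit b) (replicateRow Unit b) 1).submatrix
        (Equiv.optionEquivSumPUnit.{0} n) (Equiv.optionEquivSumPUnit.{0} n) := by
    ext (_ | u) (_ | v) <;> rfl
  let _ : Invertible (1 : Matrix Unit Unit ℝ) := invertibleOne
  rw [hblocks, posSemidef_submatrix_equiv]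
  simpa [vecMulVec_eq Unit] using
    PosDef.fromBlocks₂₂ C (replicateCol Unit b) (PosDef.one (R := ℝ))

lemma dotProduct_vecMulVec_self_mulVec (a x : n → ℝ) :
    x ⬝ᵥ (vecMulVec a a *ᵥ x) = (a ⬝ᵥ x) ^ 2 := by
  rw [vecMulVec_mulVec]
  simp [dotProduct_comm x a, sq]

lemma posSemidef_card_smul_sum_vecMulVec_sub [Fintype ι] (b : ι → n → ℝ) :
    ((Fintype.card ι : ℝ) • ∑ i, vecMulVec (b i) (b i)
      - vecMulVec (∑ i, b i) (∑ i, b i)).PosSemidef := by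
  refine .of_dotProduct_mulVec_nonneg ?_ fun x => ?_
  · ext u v
    simp [vecMulVec_apply, Matrix.sum_apply, mul_comm]
  · simp only [star_trivial, sub_mulVec, smul_mulVec, sum_mulVec, dotProduct_sub,
      dotProduct_smul, dotProduct_sum, dotProduct_vecMulVec_self_mulVec, sum_dotProduct]
    simpa [sub_nonneg] using sq_sum_le_card_mul_sum_sq (s := Finset.univ) (f := (b · ⬝ᵥ x))

lemma posSemidef_of_eq_ite [DecidableEq n] {a b : ℝ} (hab : b ≤ a)
    (hcard : 0 ≤ a + (Fintype.card n - 1) * b) :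
    (of fun i j : n => if i = j then a else b).PosSemidef := by
  have hM : (of fun i j : n => if i = j then a else b)
      = (a - b) • (1 : Matrix n n ℝ) + b • vecMulVec 1 1 := by
    ext i j
    by_cases h : i = j <;> simp [h]
  rw [hM]
  refine .of_dotProduct_mulVec_nonneg ?_ fun x => ?_
  · ext i j
    by_cases h : i = j <;> simp [h, eq_comm]
  · simp only [star_trivial, add_mulVec, smul_mulVec, one_mulVec, dotProduct_add,
      dotProduct_smul, dotProduct_vecMulVec_self_mulVec, smul_eq_mul]
    have hcs := sq_sum_le_card_mul_sum_sq (s := Finset.univ) (f := x)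
    have hsq : x ⬝ᵥ x = ∑ i, x i ^ 2 := by simp [dotProduct, sq]
    have h1 : (1 : n → ℝ) ⬝ᵥ x = ∑ i, x i := by simp [dotProduct]
    rw [hsq, h1]
    rw [Finset.card_univ] at hcs
    have hx : 0 ≤ ∑ i, x i ^ 2 := by positivity
    rcases le_or_gt 0 b with hb | hb
    · nlinarith [sq_nonneg (∑ i, x i)]
    · nlinarith

lemma PosSemidef.apply_le_of_diag_eq {M : Matrix n n ℝ} (hM : M.PosSemidef) {c : ℝ} {u v : n}
    (hu : M u u = c) (hv : M v v = c) : M u v ≤ c := by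
  classical
  have h := hM.dotProduct_mulVec_nonneg (Pi.single u 1 - Pi.single v 1)
  have hsymm : M v u = M u v := hM.1.apply u v
  simp only [star_trivial, mulVec_sub, mulVec_single, MulOpposite.op_one, one_smul,
    dotProduct_sub, sub_dotProduct, single_dotProduct, col_apply, one_mul, sub_nonneg,
    tsub_le_iff_right] at h
  linarith

end Matrix

lemma DoublyNonneg.add_diagonal {n : Type*} [Fintype n] [DecidableEq n] {X : Matrix n n ℝ}
    (hX : DoublyNonneg X) {d : n → ℝ} (hd : 0 ≤ d) : DoublyNonneg (X + diagonal d) := by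
  refine ⟨hX.1.add (.diagonal hd), fun u v => ?_⟩
  rw [Matrix.add_apply, diagonal_apply]
  split_ifs
  · exact add_nonneg (hX.2 u v) (hd u)
  · rw [add_zero]
    exact hX.2 u v

lemma DoublyNonneg.smul {n : Type*} [Fintype n] {X : Matrix n n ℝ} (hX : DoublyNonneg X)
    {c : ℝ} (hc : 0 ≤ c) : DoublyNonneg (c • X) :=
  ⟨hX.1.smul hc, fun u v => mul_nonneg hc (hX.2 u v)⟩

lemma natCast_sq_mul_sub_one_nonneg (t : ℕ) : 0 ≤ (t : ℝ) ^ 2 * (t - 1) := by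
  rcases t with _ | t
  · simp
  · push_cast
    rw [add_sub_cancel_right]
    positivity

noncomputable def liftWeight (t : ℕ) : Matrix (Fin t) (Fin t) ℝ :=
  of fun i j => if i = j then 1 / (t : ℝ) ^ 2 else -1 / ((t : ℝ) ^ 2 * (t - 1))

lemma posSemidef_liftWeight (t : ℕ) : (liftWeight t).PosSemidef := by
  have hb : -1 / ((t : ℝ) ^ 2 * (t - 1)) ≤ 0 :=
    div_nonpos_of_nonpos_of_nonneg (by norm_num) (natCast_sq_mul_sub_one_nonneg t)
  refine posSemidef_of_eq_ite (hb.trans (by positivity : (0 : ℝ) ≤ 1 / (t : ℝ) ^ 2)) ?_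
  -- `(t - 1) / (t - 1)` is `1`, or `0` when `t = 1`
  have : ((t : ℝ) - 1) / (t - 1) ≤ 1 := div_self_le_one _
  rw [Fintype.card_fin]
  calc (0 : ℝ) ≤ (1 - (t - 1) / (t - 1)) * (1 / (t : ℝ) ^ 2) := by
        have : 0 ≤ 1 - ((t : ℝ) - 1) / (t - 1) := by linarith
        positivity
    _ = _ := by simp only [div_eq_mul_inv, mul_inv]; ring

section

variable {V : Type*}

noncomputable def liftedBlock (t : ℕ) (X : Matrix V V ℝ) : Matrix (V × Fin t) (V × Fin t) ℝ :=
  of fun p q => if p.2 = q.2 then X p.1 q.1 / (t : ℝ) ^ 2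
    else (t - X p.1 q.1) / ((t : ℝ) ^ 2 * (t - 1))

lemma liftedBlock_sub_vecMulVec (t : ℕ) (X : Matrix V V ℝ) :
    liftedBlock t X - vecMulVec (fun _ => (t : ℝ)⁻¹) (fun _ => (t : ℝ)⁻¹)
      = (X - of fun _ _ => 1) ⊗ₖ liftWeight t := by
  ext ⟨u, i⟩ ⟨v, j⟩
  simp only [liftedBlock, liftWeight, Matrix.sub_apply, of_apply, vecMulVec_apply,
    kronecker_apply]
  split_ifs with hij
  · ring
  · have ht : (t : ℝ) - 1 ≠ 0 := by
      have := Fin.val_ne_of_ne hij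
      have : (1 : ℝ) < t := by exact_mod_cast (by omega : 1 < t)
      linarith
    field_simp
    ring

noncomputable def diagBlockSum {t : ℕ} (Y : Matrix (Option (V × Fin t)) (Option (V × Fin t)) ℝ) :
    Matrix V V ℝ :=
  ∑ i, Y.submatrix (fun u => some (u, i)) (fun u => some (u, i))

@[simp]
lemma diagBlockSum_apply {t : ℕ} (Y : Matrix (Option (V × Fin t)) (Option (V × Fin t)) ℝ)
    (u v : V) : diagBlockSum Y u v = ∑ i, Y (some (u, i)) (some (v, i)) := by
  simp [diagBlockSum, Matrix.sum_apply]

variable [Fintype V]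

structure IsLiftedFeasible (G : SimpleGraph V) (t : ℕ)
    (Y : Matrix (Option (V × Fin t)) (Option (V × Fin t)) ℝ) : Prop where
  doublyNonneg : DoublyNonneg Y
  apex : Y none none = 1
  sum_apex_row : ∀ u : V, ∑ i : Fin t, Y none (some (u, i)) = 1
  sum_block : ∀ u : V, ∑ i : Fin t, ∑ j : Fin t, Y (some (u, i)) (some (u, j)) = 1
  adj : ∀ (i : Fin t) (u v : V), G.Adj u v → Y (some (u, i)) (some (v, i)) = 0
  block_offDiag : ∀ (u : V) (i j : Fin t), i ≠ j → Y (some (u, i)) (some (u, j)) = 0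

theorem isLiftedFeasible_bordered_liftedBlock {G : SimpleGraph V} {t : ℕ} {X : Matrix V V ℝ}
    (hX : DoublyNonneg X) (hdiag : ∀ u, X u u = t) (hadj : ∀ u v, G.Adj u v → X u v = 0)
    (hJ : (X - of fun _ _ => 1).PosSemidef) :
    IsLiftedFeasible G t (bordered (fun _ => (t : ℝ)⁻¹) (liftedBlock t X)) := by
  have ht : ∀ u : V, (t : ℝ) ≠ 0 := fun u => by
    have := hJ.diag_nonneg (i := u)
    simp only [Matrix.sub_apply, of_apply, hdiag, sub_nonneg] at this
    positivity
  refine ⟨⟨?_, ?_⟩, rfl, fun u => ?_, fun u => ?_, fun i u v huv => ?_, fun u i j hij => ?_⟩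
  · rw [posSemidef_bordered_iff, liftedBlock_sub_vecMulVec]
    exact hJ.kronecker (posSemidef_liftWeight t)
  · rintro (_ | ⟨u, i⟩) (_ | ⟨v, j⟩)
    · exact zero_le_one
    · exact inv_nonneg.mpr (Nat.cast_nonneg t)
    · exact inv_nonneg.mpr (Nat.cast_nonneg t)
    · simp only [bordered, liftedBlock, of_apply]
      split_ifs
      · exact div_nonneg (hX.2 u v) (by positivity)
      · exact div_nonneg (sub_nonneg.mpr (hX.1.apply_le_of_diag_eq (hdiag u) (hdiag v)))
          (natCast_sq_mul_sub_one_nonneg t)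
  · simp [bordered, ht u]
  · simp only [bordered, liftedBlock, of_apply, hdiag, sub_self, zero_div, Finset.sum_ite_eq,
      Finset.mem_univ, ↓reduceIte, Finset.sum_const, Finset.card_univ, Fintype.card_fin,
      nsmul_eq_mul]
    field_simp [ht u]
  · simp [bordered, liftedBlock, hadj u v huv]
  · simp [bordered, liftedBlock, hij, hdiag]

theorem exists_isLiftedFeasible {G : SimpleGraph V} [DecidableEq V] {t : ℕ} {X : Matrix V V ℝ}
    (hX : DoublyNonneg X) (hceil : ∀ u, ⌈X u u⌉ = (t : ℤ))
    (hadj : ∀ u v, G.Adj u v → X u v = 0) (hJ : (X - of fun _ _ => 1).PosSemidef) :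
    ∃ Y, IsLiftedFeasible G t Y := by
  have hd : 0 ≤ fun u => (t : ℝ) - X u u := fun u =>
    sub_nonneg.mpr (by exact_mod_cast Int.ceil_le.mp (hceil u).le)
  refine ⟨_, isLiftedFeasible_bordered_liftedBlock (hX.add_diagonal hd) (fun u => by simp)
    (fun u v huv => by simp [huv.ne, hadj u v huv]) ?_⟩
  rw [add_sub_right_comm]
  exact hJ.add (.diagonal hd)

lemma DoublyNonneg.diagBlockSum {t : ℕ}
    {Y : Matrix (Option (V × Fin t)) (Option (V × Fin t)) ℝ} (hY : DoublyNonneg Y) :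
    DoublyNonneg (diagBlockSum Y) :=
  ⟨posSemidef_sum _ fun _ _ => hY.1.submatrix _, fun u v => by
    rw [diagBlockSum_apply]
    exact Finset.sum_nonneg fun _ _ => hY.2 _ _⟩

namespace IsLiftedFeasible

variable {G : SimpleGraph V} {t : ℕ} {Y : Matrix (Option (V × Fin t)) (Option (V × Fin t)) ℝ}

lemma diagBlockSum_apply_self (hY : IsLiftedFeasible G t Y) (u : V) :
    diagBlockSum Y u u = 1 := by
  rw [diagBlockSum_apply, ← hY.sum_block u]
  refine Finset.sum_congr rfl fun i _ => ?_
  rw [Fintype.sum_eq_single i fun j hji => hY.block_offDiag u i j hji.symm]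

theorem posSemidef_smul_diagBlockSum_sub (hY : IsLiftedFeasible G t Y) :
    ((t : ℝ) • diagBlockSum Y - of fun _ _ => 1).PosSemidef := by
  set b : Fin t → V → ℝ := fun i u => Y (some (u, i)) none
  have hsymm : ∀ p q, Y p q = Y q p := fun p q => hY.doublyNonneg.1.isHermitian.apply q p
  have hschur : ∀ i, (Y.submatrix (fun u => some (u, i)) (fun u => some (u, i))
      - vecMulVec (b i) (b i)).PosSemidef := fun i => by
    rw [← posSemidef_bordered_iff]
    convert hY.doublyNonneg.1.submatrix (Option.map (·, i)) using 1
    ext (_ | u) (_ | v)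
    · exact hY.apex.symm
    · exact hsymm _ _
    · rfl
    · rfl
  have hb : ∑ i, b i = 1 := funext fun u => by
    simp only [b, Finset.sum_apply, Pi.one_apply, hsymm _ none]
    exact hY.sum_apex_row u
  have hJ : (of fun _ _ => 1 : Matrix V V ℝ) = vecMulVec 1 1 := by
    ext; simp [vecMulVec_apply]
  have hdecomp : (t : ℝ) • diagBlockSum Y - of (fun _ _ => 1)
      = (t : ℝ) • ∑ i, (Y.submatrix (fun u => some (u, i)) (fun u => some (u, i))
          - vecMulVec (b i) (b i))
        + ((Fintype.card (Fin t) : ℝ) • ∑ i, vecMulVec (b i) (b i)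
          - vecMulVec (∑ i, b i) (∑ i, b i)) := by
    rw [hb, hJ, Fintype.card_fin, Finset.sum_sub_distrib, smul_sub, diagBlockSum]
    abel
  rw [hdecomp]
  exact ((posSemidef_sum _ fun i _ => hschur i).smul (Nat.cast_nonneg t)).add
    (posSemidef_card_smul_sum_vecMulVec_sub b)

end IsLiftedFeasible

end

theorem dnn_chromatic_program_equiv_general {V : Type*} [Fintype V] [DecidableEq V]
    (G : SimpleGraph V) (t : ℕ) :
    (∃ X : Matrix V V ℝ, DoublyNonneg X ∧ (∀ u, ⌈X u u⌉ = (t : ℤ)) ∧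
        (∀ u v, G.Adj u v → X u v = 0) ∧
        (X - Matrix.of fun _ _ => (1 : ℝ)).PosSemidef) ↔
    (∃ X : Matrix (Option (V × Fin t)) (Option (V × Fin t)) ℝ, DoublyNonneg X ∧
        X none none = 1 ∧
        (∀ u : V, ∑ i : Fin t, X none (some (u, i)) = 1) ∧
        (∀ u : V, ∑ i : Fin t, ∑ j : Fin t, X (some (u, i)) (some (u, j)) = 1) ∧
        (∀ (i : Fin t) (u v : V), G.Adj u v → X (some (u, i)) (some (v, i)) = 0) ∧
        (∀ (u : V) (i j : Fin t), i ≠ j → X (some (u, i)) (some (u, j)) = 0)) := by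
  constructor
  · rintro ⟨X, hX, hceil, hadj, hJ⟩
    obtain ⟨Y, hY⟩ := exists_isLiftedFeasible hX hceil hadj hJ
    exact ⟨Y, hY.doublyNonneg, hY.apex, hY.sum_apex_row, hY.sum_block, hY.adj, hY.block_offDiag⟩
  · rintro ⟨Y, hdnn, hapex, hrow, hblock, hadj, hoff⟩
    have hY : IsLiftedFeasible G t Y := ⟨hdnn, hapex, hrow, hblock, hadj, hoff⟩
    refine ⟨(t : ℝ) • diagBlockSum Y, hdnn.diagBlockSum.smul (Nat.cast_nonneg t), fun u => ?_,
      fun u v huv => ?_, hY.posSemidef_smul_diagBlockSum_sub⟩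
    · rw [Matrix.smul_apply, hY.diagBlockSum_apply_self, smul_eq_mul, mul_one, Int.ceil_natCast]
    · simp [hadj _ u v huv]

/-- Equivalence, over the doubly nonnegative cone, between the small program defining
`⌈ϑ⁺(Ḡ)⌉ ≤ t` and the lifted program on indices `{0} ∪ V(G)×[t]`. -/
theorem dnn_chromatic_program_equiv {V : Type*} [Fintype V] [DecidableEq V]
    (G : SimpleGraph V) (t : ℕ) (ht : 1 ≤ t) :
    (∃ X : Matrix V V ℝ, DoublyNonneg X ∧ (∀ u, ⌈X u u⌉ = (t : ℤ)) ∧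
        (∀ u v, G.Adj u v → X u v = 0) ∧
        (X - Matrix.of fun _ _ => (1 : ℝ)).PosSemidef) ↔
    (∃ X : Matrix (Option (V × Fin t)) (Option (V × Fin t)) ℝ, DoublyNonneg X ∧
        X none none = 1 ∧
        (∀ u : V, ∑ i : Fin t, X none (some (u, i)) = 1) ∧
        (∀ u : V, ∑ i : Fin t, ∑ j : Fin t, X (some (u, i)) (some (u, j)) = 1) ∧
        (∀ (i : Fin t) (u v : V), G.Adj u v → X (some (u, i)) (some (v, i)) = 0) ∧
        (∀ (u : V) (i j : Fin t), i ≠ j → X (some (u, i)) (some (u, j)) = 0)) :=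
  dnn_chromatic_program_equiv_general G t
end

section
/- CS₊ⁿ ⊆ CS_{∞+}ⁿ ⊆ cl(CS₊ⁿ), and hence cl(CS_{∞+}ⁿ) = cl(CS₊ⁿ), where CS_{∞+}ⁿ is the set of n×n symmetric matrices admitting a Gram representation by infinite positive semidefinite matrices in S^ℕ. -/
/-!
Extending a psd `d × d` matrix by zeros gives an element of `S^ℕ` that is psd and has the same
trace inner products, so `CS₊ⁿ ⊆ CS_{∞+}ⁿ`. Conversely, if `A_{ij} = ⟨X_i, X_j⟩`, the leading
`ℓ × ℓ` blocks of the `X_i` are psd and their Gram matrix is the partial sum over `[0, ℓ)²` of the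
series `⟨X_i, X_j⟩`, which is summable because `|xy| ≤ (x² + y²) / 2`; hence these Gram matrices
in `CS₊ⁿ` converge to `A`.
-/

open Matrix

/-- An infinite symmetric matrix with finite Hilbert–Schmidt norm all of whose finite
principal submatrices are psd. -/
def InfinitePSD (X : ℕ → ℕ → ℝ) : Prop :=
  (∀ i j, X i j = X j i) ∧ Summable (fun p : ℕ × ℕ => (X p.1 p.2) ^ 2) ∧
  ∀ m : ℕ, (Matrix.of fun i j : Fin m => X i j).PosSemidef

/-- `A ∈ CS_{∞+}ⁿ`: `A` has a Gram representation by infinite psd matrices in `S^ℕ`. -/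
def CSinfPlus {n : ℕ} (A : Matrix (Fin n) (Fin n) ℝ) : Prop :=
  ∃ X : Fin n → (ℕ → ℕ → ℝ), (∀ i, InfinitePSD (X i)) ∧
    ∀ i j, A i j = ∑' p : ℕ × ℕ, X i p.1 p.2 * X j p.1 p.2

open Filter Topology Finset

lemma Fin.sum_ite_val_eq_mul {R : Type*} [NonAssocSemiring R] {d : ℕ} (k : ℕ) (v : Fin d → R) :
    ∑ c : Fin d, (if (c : ℕ) = k then 1 else 0) * v c = if h : k < d then v ⟨k, h⟩ else 0 := by
  split_ifs with h
  · rw [Fintype.sum_eq_single ⟨k, h⟩ fun c hc => by simp [Fin.ext_iff] at hc; simp [hc]]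
    simp
  · exact Fintype.sum_eq_zero _ fun c => by simp [show (c : ℕ) ≠ k by omega]

lemma summable_mul_of_summable_sq {ι : Type*} {f g : ι → ℝ} (hf : Summable fun i => f i ^ 2)
    (hg : Summable fun i => g i ^ 2) : Summable fun i => f i * g i := by
  refine Summable.of_norm_bounded ((hf.add hg).div_const 2) fun i => ?_
  have := two_mul_le_add_sq |f i| |g i|
  rw [sq_abs, sq_abs] at this
  rw [Real.norm_eq_abs, abs_mul]
  linarith

lemma HasSum.tendsto_sum_range_prod_range {M : Type*} [AddCommMonoid M] [TopologicalSpace M]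
    {f : ℕ × ℕ → M} {a : M} (hf : HasSum f a) :
    Tendsto (fun ℓ => ∑ p ∈ range ℓ ×ˢ range ℓ, f p) atTop (𝓝 a) := by
  have hrange : Tendsto (fun ℓ => (range ℓ, range ℓ)) atTop atTop :=
    prod_atTop_atTop_eq (α := Finset ℕ) (β := Finset ℕ) ▸
      tendsto_finset_range.prodMk tendsto_finset_range
  exact Tendsto.comp (f := fun ℓ => range ℓ ×ˢ range ℓ) hf
    (tendsto_finsetProd_atTop.comp hrange)

def leadingSubmatrix (X : ℕ → ℕ → ℝ) (m : ℕ) : Matrix (Fin m) (Fin m) ℝ :=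
  Matrix.of fun i j => X i j

lemma trace_leadingSubmatrix_mul {X Y : ℕ → ℕ → ℝ} (hY : ∀ i j, Y i j = Y j i) (ℓ : ℕ) :
    (leadingSubmatrix X ℓ * leadingSubmatrix Y ℓ).trace =
      ∑ p ∈ range ℓ ×ˢ range ℓ, X p.1 p.2 * Y p.1 p.2 := by
  rw [sum_product, ← Fin.sum_univ_eq_sum_range]
  refine Fintype.sum_congr _ _ fun i => ?_
  rw [← Fin.sum_univ_eq_sum_range, diag_apply, mul_apply]
  exact Fintype.sum_congr _ _ fun j => by simp only [leadingSubmatrix, of_apply, hY j i]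

def zeroExtend {d : ℕ} (M : Matrix (Fin d) (Fin d) ℝ) (p q : ℕ) : ℝ :=
  if h : p < d ∧ q < d then M ⟨p, h.1⟩ ⟨q, h.2⟩ else 0

def coordinateEmbedding (d m : ℕ) : Matrix (Fin d) (Fin m) ℝ :=
  Matrix.of fun c a => if (c : ℕ) = a then 1 else 0

lemma zeroExtend_eq_zero {d : ℕ} (M : Matrix (Fin d) (Fin d) ℝ) {p q : ℕ}
    (h : (p, q) ∉ range d ×ˢ range d) : zeroExtend M p q = 0 :=
  dif_neg (by simpa using h)

lemma leadingSubmatrix_zeroExtend_self {d : ℕ} (M : Matrix (Fin d) (Fin d) ℝ) :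
    leadingSubmatrix (zeroExtend M) d = M := by
  ext i j
  simp [leadingSubmatrix, zeroExtend]

lemma leadingSubmatrix_zeroExtend {d : ℕ} (M : Matrix (Fin d) (Fin d) ℝ) (m : ℕ) :
    leadingSubmatrix (zeroExtend M) m =
      (coordinateEmbedding d m)ᴴ * M * coordinateEmbedding d m := by
  ext a b
  simp only [leadingSubmatrix, zeroExtend, coordinateEmbedding, mul_apply, conjTranspose_apply,
    of_apply, star_trivial]
  simp only [Fin.sum_ite_val_eq_mul (a : ℕ) fun c => M c _, mul_comm _ (ite _ _ _)]
  rw [Fin.sum_ite_val_eq_mul]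
  by_cases ha : (a : ℕ) < d <;> by_cases hb : (b : ℕ) < d <;> simp [ha, hb]

lemma infinitePSD_zeroExtend {d : ℕ} {M : Matrix (Fin d) (Fin d) ℝ} (hM : M.PosSemidef) :
    InfinitePSD (zeroExtend M) := by
  refine ⟨fun p q => ?_, ?_, fun m => ?_⟩
  · unfold zeroExtend
    by_cases h : p < d ∧ q < d
    · rw [dif_pos h, dif_pos h.symm]
      simpa using hM.isHermitian.apply ⟨q, h.2⟩ ⟨p, h.1⟩
    · rw [dif_neg h, dif_neg fun h' => h h'.symm]
  · exact summable_of_ne_finset_zero (s := range d ×ˢ range d) fun p hp => by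
      simp [zeroExtend_eq_zero M hp]
  · change (leadingSubmatrix (zeroExtend M) m).PosSemidef
    rw [leadingSubmatrix_zeroExtend]
    exact hM.conjTranspose_mul_mul_same _

lemma csinfPlus_of_completelyPSD {n : ℕ} {A : Matrix (Fin n) (Fin n) ℝ} (hA : CompletelyPSD A) :
    CSinfPlus A := by
  obtain ⟨d, X, -, hX, hA⟩ := hA
  refine ⟨fun i => zeroExtend (X i), fun i => infinitePSD_zeroExtend (hX i), fun i j => ?_⟩
  rw [hA, tsum_eq_sum (s := range d ×ˢ range d) fun p hp => by simp [zeroExtend_eq_zero _ hp],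
    ← trace_leadingSubmatrix_mul (infinitePSD_zeroExtend (hX j)).1,
    leadingSubmatrix_zeroExtend_self, leadingSubmatrix_zeroExtend_self]

def truncatedGram {n : ℕ} (X : Fin n → ℕ → ℕ → ℝ) (ℓ : ℕ) : Matrix (Fin n) (Fin n) ℝ :=
  Matrix.of fun i j => ∑ p ∈ range ℓ ×ˢ range ℓ, X i p.1 p.2 * X j p.1 p.2

lemma completelyPSD_truncatedGram {n : ℕ} {X : Fin n → ℕ → ℕ → ℝ} (hX : ∀ i, InfinitePSD (X i))
    {ℓ : ℕ} (hℓ : 1 ≤ ℓ) : CompletelyPSD (truncatedGram X ℓ) :=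
  ⟨ℓ, fun i => leadingSubmatrix (X i) ℓ, hℓ, fun i => (hX i).2.2 ℓ,
    fun _ j => (trace_leadingSubmatrix_mul (hX j).1 ℓ).symm⟩

lemma tendsto_truncatedGram {n : ℕ} {X : Fin n → ℕ → ℕ → ℝ}
    (hX : ∀ i, Summable fun p : ℕ × ℕ => X i p.1 p.2 ^ 2) :
    Tendsto (truncatedGram X) atTop
      (𝓝 (Matrix.of fun i j => ∑' p : ℕ × ℕ, X i p.1 p.2 * X j p.1 p.2)) :=
  tendsto_pi_nhds.2 fun i => tendsto_pi_nhds.2 fun j =>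
    (summable_mul_of_summable_sq (hX i) (hX j)).hasSum.tendsto_sum_range_prod_range

lemma CSinfPlus.mem_closure_completelyPSD {n : ℕ} {A : Matrix (Fin n) (Fin n) ℝ}
    (hA : CSinfPlus A) : A ∈ closure {A | CompletelyPSD A} := by
  obtain ⟨X, hX, hA⟩ := hA
  rw [show A = _ from Matrix.ext hA]
  exact mem_closure_of_tendsto (tendsto_truncatedGram fun i => (hX i).2.1)
    ((eventually_ge_atTop 1).mono fun _ => completelyPSD_truncatedGram hX)

/-- `CS₊ⁿ ⊆ CS_{∞+}ⁿ ⊆ cl(CS₊ⁿ)`, and hence `cl(CS_{∞+}ⁿ) = cl(CS₊ⁿ)`. -/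
theorem csplus_subset_csinf_subset_closure (n : ℕ) :
    {A : Matrix (Fin n) (Fin n) ℝ | CompletelyPSD A} ⊆ {A | CSinfPlus A} ∧
    {A : Matrix (Fin n) (Fin n) ℝ | CSinfPlus A} ⊆
      closure {A : Matrix (Fin n) (Fin n) ℝ | CompletelyPSD A} ∧
    closure {A : Matrix (Fin n) (Fin n) ℝ | CSinfPlus A} =
      closure {A : Matrix (Fin n) (Fin n) ℝ | CompletelyPSD A} := by
  have hsub : {A : Matrix (Fin n) (Fin n) ℝ | CompletelyPSD A} ⊆ {A | CSinfPlus A} :=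
    fun _ => csinfPlus_of_completelyPSD
  have hclosure : {A : Matrix (Fin n) (Fin n) ℝ | CSinfPlus A} ⊆
      closure {A | CompletelyPSD A} := fun _ => CSinfPlus.mem_closure_completelyPSD
  exact ⟨hsub, hclosure, (closure_minimal hclosure isClosed_closure).antisymm (closure_mono hsub)⟩
end
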